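/- arXiv:1909.08110 — 11 statements merged into one kernel-verified Lean document; each statement's English description precedes it below -/
import Mathlib

section
/- Let G be a Polish group acting continuously on a Polish space X, and let μ be a Borel probability measure on X invariant under the action. If for every g ≠ 1 the set A_g = {x ∈ X : g·x ≠ x} has positive μ-measure, then for every g ≠ 1 there exist an open neighborhood N of g with 1 ∉ N and an open set V ⊆ X with μ(V) > 0 such that N·V ∩ V = ∅. -/
open MeasureTheory

lemma exists_isOpen_forall_smul_notMem_of_smul_ne {G X : Type*} [TopologicalSpace G]
    [TopologicalSpace X] [T2Space X] [SMul G X] [ContinuousSMul G X] {g : G} {x : X}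
    (hgx : g • x ≠ x) :
    ∃ N : Set G, IsOpen N ∧ g ∈ N ∧
      ∃ V : Set X, IsOpen V ∧ x ∈ V ∧ ∀ h ∈ N, ∀ y ∈ V, h • y ∉ V := by
  obtain ⟨U, W, hU, hW, hgxU, hxW, hUW⟩ := t2_separation hgx
  have hU_nhds : U ∈ nhds (g • x) := hU.mem_nhds hgxU
  obtain ⟨N, V, hN, hgN, hV, hxV, hNV⟩ :=
    mem_nhds_prod_iff'.1 (continuous_smul.continuousAt (x := (g, x)) hU_nhds)
  refine ⟨N, hN, hgN, V ∩ W, hV.inter hW, ⟨hxV, hxW⟩, fun h hh y hy hhy => ?_⟩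
  exact hUW.notMem_of_mem_left (hNV (Set.mk_mem_prod hh hy.1)) hhy.2

theorem stmt0_general {G X : Type*} [Group G] [TopologicalSpace G]
    [TopologicalSpace X] [PolishSpace X] [MulAction G X]
    [ContinuousSMul G X] [MeasurableSpace X]
    (μ : Measure X)
    (hpos : ∀ g : G, g ≠ 1 → 0 < μ {x | g • x ≠ x}) :
    ∀ g : G, g ≠ 1 →
      ∃ N : Set G, IsOpen N ∧ g ∈ N ∧ (1 : G) ∉ N ∧
        ∃ V : Set X, IsOpen V ∧ 0 < μ V ∧
          ∀ h ∈ N, ∀ x ∈ V, h • x ∉ V := by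
  intro g hg
  -- A point of the support moved by `g`: every open set around it has positive measure.
  obtain ⟨x, hgx, hx⟩ := μ.nonempty_inter_support_of_pos (hpos g hg)
  obtain ⟨N, hN, hgN, V, hV, hxV, hNV⟩ := exists_isOpen_forall_smul_notMem_of_smul_ne hgx
  refine ⟨N, hN, hgN, fun h1N => hNV 1 h1N x hxV (by rwa [one_smul]), V, hV, ?_, hNV⟩
  exact (μ.mem_support_iff_forall x).1 hx V (hV.mem_nhds hxV)

/-- If a Polish group `G` acts continuously on a Polish space `X` with a
`G`-invariant Borel probability measure `μ` such that `μ {x | g • x ≠ x} > 0` for all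
`g ≠ 1`, then for every `g ≠ 1` there are an open neighborhood `N` of `g` with `1 ∉ N`
and an open set `V ⊆ X` with `μ V > 0` such that `N • V ∩ V = ∅`. -/
theorem stmt0 {G X : Type*} [Group G] [TopologicalSpace G] [IsTopologicalGroup G]
    [PolishSpace G] [TopologicalSpace X] [PolishSpace X] [MulAction G X]
    [ContinuousSMul G X] [MeasurableSpace X] [BorelSpace X]
    (μ : Measure X) [IsProbabilityMeasure μ]
    (hinv : ∀ g : G, MeasurePreserving (fun x => g • x) μ μ)
    (hpos : ∀ g : G, g ≠ 1 → 0 < μ {x | g • x ≠ x}) :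
    ∀ g : G, g ≠ 1 →
      ∃ N : Set G, IsOpen N ∧ g ∈ N ∧ (1 : G) ∉ N ∧
        ∃ V : Set X, IsOpen V ∧ 0 < μ V ∧
          ∀ h ∈ N, ∀ x ∈ V, h • x ∉ V :=
  stmt0_general μ hpos
end

section
/- Let G be a Polish group acting continuously on a Polish space X with a G-invariant Borel probability measure μ, such that μ(A_g) > 0 for every g ≠ 1, where A_g = {x : g·x ≠ x}. Consider the diagonal action of G on X^ℕ with the product measure μ^ℕ. Then the complement of the free part, Z = {z ∈ X^ℕ : ∃ g ≠ 1, g·z = z}, has μ^ℕ-measure zero. -/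
/-!
The set of pairs `(g, x)` with `g • x ≠ x` is open in `G × X`, so it is a union of basic
rectangles `U × V` drawn from countable bases. For `g ≠ 1`, the set `{x | g • x ≠ x}` has positive
measure and is covered by the countably many `V` of such rectangles with `g ∈ U`, so one of them
has `μ V > 0`. Every `h ∈ U` then moves every point of `V`, so a sequence fixed by some `h ∈ U`
avoids `V` in all coordinates, which happens with probability `lim (1 - μ V) ^ m = 0`; countably
many such `U` cover `G \ {1}`.
-/

open MeasureTheory Filter TopologicalSpace

lemma measure_setOf_forall_notMem_eq_zero {X : Type*} [MeasurableSpace X]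
    (μ : Measure X) [IsProbabilityMeasure μ] (ν : Measure (ℕ → X))
    (hν : ∀ (s : Finset ℕ) (A : ℕ → Set X), (∀ i, MeasurableSet (A i)) →
      ν {z : ℕ → X | ∀ i ∈ s, z i ∈ A i} = ∏ i ∈ s, μ (A i))
    {V : Set X} (hV : MeasurableSet V) (hμV : 0 < μ V) :
    ν {z : ℕ → X | ∀ n, z n ∉ V} = 0 := by
  have hlt : μ Vᶜ < 1 := by
    rw [prob_compl_eq_one_sub hV]
    exact ENNReal.sub_lt_self ENNReal.one_ne_top one_ne_zero hμV.ne'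
  have hbound (m : ℕ) : ν {z : ℕ → X | ∀ n, z n ∉ V} ≤ μ Vᶜ ^ m :=
    calc ν {z : ℕ → X | ∀ n, z n ∉ V}
        ≤ ν {z : ℕ → X | ∀ i ∈ Finset.range m, z i ∈ Vᶜ} := measure_mono fun z hz i _ => hz i
      _ = μ Vᶜ ^ m := by
        rw [hν _ _ fun _ => hV.compl, Finset.prod_const, Finset.card_range]
  exact le_antisymm
    (ge_of_tendsto' (ENNReal.tendsto_pow_atTop_nhds_zero_of_lt_one hlt) hbound) zero_le

lemma exists_mem_countableBasis_forall_smul_ne {G X : Type*} [TopologicalSpace G]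
    [SecondCountableTopology G] [TopologicalSpace X] [SecondCountableTopology X] [T2Space X]
    [SMul G X] [ContinuousSMul G X] [MeasurableSpace X] (μ : Measure X) {g : G}
    (hg : 0 < μ {x | g • x ≠ x}) :
    ∃ U ∈ countableBasis G, ∃ V ∈ countableBasis X,
      g ∈ U ∧ 0 < μ V ∧ ∀ h ∈ U, ∀ x ∈ V, h • x ≠ x := by
  set S := {V ∈ countableBasis X | ∃ U ∈ countableBasis G, g ∈ U ∧ ∀ h ∈ U, ∀ x ∈ V, h • x ≠ x}
  have hcover : {x | g • x ≠ x} ⊆ ⋃₀ S := by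
    intro x hx
    have hW : IsOpen {p : G × X | p.1 • p.2 ≠ p.2} :=
      isOpen_ne_fun (continuous_fst.smul continuous_snd) continuous_snd
    obtain ⟨u, v, hu, hv, hgu, hxv, huv⟩ := isOpen_prod_iff.1 hW g x hx
    obtain ⟨U, hU, hgU, hUu⟩ := (isBasis_countableBasis G).exists_subset_of_mem_open hgu hu
    obtain ⟨V, hV, hxV, hVv⟩ := (isBasis_countableBasis X).exists_subset_of_mem_open hxv hv
    exact ⟨V, ⟨hV, U, hU, hgU, fun h hh y hy => huv (Set.mk_mem_prod (hUu hh) (hVv hy))⟩, hxV⟩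
  have hS : S.Countable := (countable_countableBasis X).mono fun _ hV => hV.1
  by_contra hnone
  refine hg.ne' (measure_mono_null hcover ((measure_sUnion_null_iff hS).2 ?_))
  rintro V ⟨hV, U, hU, hgU, hmove⟩
  by_contra hV0
  exact hnone ⟨U, hU, V, hV, hgU, pos_iff_ne_zero.2 hV0, hmove⟩

theorem stmt1_general {G X : Type*} [Group G] [TopologicalSpace G]
    [PolishSpace G] [TopologicalSpace X] [PolishSpace X] [MulAction G X]
    [ContinuousSMul G X] [MeasurableSpace X] [BorelSpace X]
    (μ : Measure X) [IsProbabilityMeasure μ]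
    (hpos : ∀ g : G, g ≠ 1 → 0 < μ {x | g • x ≠ x})
    (ν : Measure (ℕ → X))
    (hν : ∀ (s : Finset ℕ) (A : ℕ → Set X), (∀ i, MeasurableSet (A i)) →
      ν {z : ℕ → X | ∀ i ∈ s, z i ∈ A i} = ∏ i ∈ s, μ (A i)) :
    ν {z : ℕ → X | ∃ g : G, g ≠ 1 ∧ ∀ n : ℕ, g • z n = z n} = 0 := by
  set P := {p : Set G × Set X | p ∈ countableBasis G ×ˢ countableBasis X ∧
    0 < μ p.2 ∧ ∀ h ∈ p.1, ∀ x ∈ p.2, h • x ≠ x}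
  have hP : P.Countable :=
    ((countable_countableBasis G).prod (countable_countableBasis X)).mono fun _ hp => hp.1
  have hcover : {z : ℕ → X | ∃ g : G, g ≠ 1 ∧ ∀ n : ℕ, g • z n = z n} ⊆
      ⋃ p ∈ P, {z : ℕ → X | ∀ n, z n ∉ p.2} := by
    rintro z ⟨g, hg, hfix⟩
    obtain ⟨U, hU, V, hV, hgU, hμV, hmove⟩ :=
      exists_mem_countableBasis_forall_smul_ne μ (hpos g hg)
    exact Set.mem_biUnion (x := (U, V)) ⟨⟨hU, hV⟩, hμV, hmove⟩
      fun n hzn => hmove g hgU (z n) hzn (hfix n)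
  refine measure_mono_null hcover ((measure_biUnion_null_iff hP).2 fun p hp => ?_)
  exact measure_setOf_forall_notMem_eq_zero μ ν hν
    (isOpen_of_mem_countableBasis hp.1.2).measurableSet hp.2.1

/-- With `G`, `X`, `μ` as in Statement 0 (continuous action of a Polish
group on a Polish space, invariant Borel probability measure, `μ {x | g • x ≠ x} > 0`
for `g ≠ 1`), for the diagonal action of `G` on `X ^ ℕ` with the product measure `ν`
(characterized on cylinder sets), the complement of the free part
`Z = {z : ℕ → X | ∃ g ≠ 1, ∀ n, g • z n = z n}` is `ν`-null. -/
theorem stmt1 {G X : Type*} [Group G] [TopologicalSpace G] [IsTopologicalGroup G]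
    [PolishSpace G] [TopologicalSpace X] [PolishSpace X] [MulAction G X]
    [ContinuousSMul G X] [MeasurableSpace X] [BorelSpace X]
    (μ : Measure X) [IsProbabilityMeasure μ]
    (hinv : ∀ g : G, MeasurePreserving (fun x => g • x) μ μ)
    (hpos : ∀ g : G, g ≠ 1 → 0 < μ {x | g • x ≠ x})
    (ν : Measure (ℕ → X)) [IsProbabilityMeasure ν]
    (hν : ∀ (s : Finset ℕ) (A : ℕ → Set X), (∀ i, MeasurableSet (A i)) →
      ν {z : ℕ → X | ∀ i ∈ s, z i ∈ A i} = ∏ i ∈ s, μ (A i)) :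
    ν {z : ℕ → X | ∃ g : G, g ≠ 1 ∧ ∀ n : ℕ, g • z n = z n} = 0 :=
  stmt1_general μ hpos ν hν
end

section
/- Let K be a Polish locally compact group acting freely and in a Borel way on a standard Borel space X, preserving a Borel probability measure μ, and let λ be Lebesgue measure on [0,1]. Define an action of the semidirect product S_∞ ⋉ K^ℕ on X^ℕ × [0,1]^ℕ by (σ,(g_n))·((x_n),(y_n)) = ((g_n·x_{σ⁻¹(n)}), (y_{σ⁻¹(n)})). Then this is a Borel action that preserves the product measure μ^ℕ × λ^ℕ, and its free part has full measure. -/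
/-!
The measures `νX` and `νY` are identified with the product measures `Measure.infinitePi`, which
are invariant under permutations of the coordinates and under coordinatewise measure-preserving
maps; this gives invariance. A point `((xₙ), (yₙ))` with pairwise distinct `yₙ` has trivial
stabiliser: `σ` must fix every `n`, and then freeness of the `K`-action forces every `gₙ = 1`.
The `yₙ` are almost surely pairwise distinct because two distinct coordinates of `λ^ℕ` have
joint law `λ ⊗ λ`, which does not charge the diagonal.
-/

open MeasureTheory

/-- The action of `S_∞` on `K ^ ℕ` by permuting coordinates, `σ · (gₙ) = (g_{σ⁻¹ n})`. -/
def permAct (K : Type*) [Group K] : Equiv.Perm ℕ →* MulAut (ℕ → K) where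
  toFun σ :=
    { toFun := fun g n => g (σ⁻¹ n)
      invFun := fun g n => g (σ n)
      left_inv := fun g => by ext n; simp
      right_inv := fun g => by ext n; simp
      map_mul' := fun g h => rfl }
  map_one' := by ext g n; simp
  map_mul' := fun σ τ => by ext g n; simp [mul_inv_rev]

/-- The action of `S_∞ ⋉ K ^ ℕ` on `X ^ ℕ × [0,1] ^ ℕ` given by
`(σ, (gₙ)) · ((xₙ), (yₙ)) = ((gₙ · x_{σ⁻¹ n}), (y_{σ⁻¹ n}))`. -/
def sdAct {K X : Type*} [Group K] [MulAction K X]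
    (p : (ℕ → K) ⋊[permAct K] Equiv.Perm ℕ)
    (z : (ℕ → X) × (ℕ → unitInterval)) : (ℕ → X) × (ℕ → unitInterval) :=
  (fun n => p.left n • z.1 (p.right⁻¹ n), fun n => z.2 (p.right⁻¹ n))

open Function

section InfinitePi

variable {ι α : Type*} [MeasurableSpace α] (ρ : Measure α) [IsProbabilityMeasure ρ]

theorem measurePreserving_infinitePi_comp_perm (σ : Equiv.Perm ι) :
    MeasurePreserving (fun (y : ι → α) i => y (σ⁻¹ i))
      (Measure.infinitePi fun _ => ρ) (Measure.infinitePi fun _ => ρ) :=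
  ⟨by fun_prop, Measure.map_infinitePi_infinitePi_of_inj (σ⁻¹).injective⟩

theorem measurePreserving_infinitePi_map {f : ι → α → α}
    (hf : ∀ i, MeasurePreserving (f i) ρ ρ) :
    MeasurePreserving (fun (y : ι → α) i => f i (y i))
      (Measure.infinitePi fun _ => ρ) (Measure.infinitePi fun _ => ρ) := by
  refine ⟨measurable_pi_lambda _ fun i => (hf i).measurable.comp (measurable_pi_apply i), ?_⟩
  rw [Measure.infinitePi_map_pi _ fun i => (hf i).measurable]
  simp only [(hf _).map_eq]

theorem Measure.prod_self_diagonal_eq_zero [MeasurableEq α] [NullSingletonClass ρ] :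
    (ρ.prod ρ) (Set.diagonal α) = 0 := by
  rw [Measure.prod_apply measurableSet_diagonal]
  simp [Set.preimage, Set.diagonal]

theorem ae_injective_infinitePi [Countable ι] [MeasurableEq α] [NullSingletonClass ρ] :
    ∀ᵐ y ∂Measure.infinitePi (fun _ : ι => ρ), Injective y := by
  have hne (m n : ι) : ∀ᵐ y ∂Measure.infinitePi (fun _ : ι => ρ), y m = y n → m = n := by
    by_cases hmn : m = n
    · exact ae_of_all _ fun _ _ => hmn
    have hdiag : ∀ᵐ q ∂ρ.prod ρ, q ∉ Set.diagonal α :=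
      measure_eq_zero_iff_ae_notMem.mp (Measure.prod_self_diagonal_eq_zero ρ)
    rw [← Measure.infinitePi_map_eval_prod (P := fun _ : ι => ρ) hmn] at hdiag
    exact (ae_of_ae_map (by fun_prop) hdiag).mono fun y hy h => absurd h hy
  filter_upwards [ae_all_iff.mpr fun m => ae_all_iff.mpr (hne m)] with y hy m n using hy m n

end InfinitePi

theorem eq_infinitePi_volume_unitInterval (ν : Measure (ℕ → unitInterval))
    (hν : ∀ (s : Finset ℕ) (A : ℕ → Set ℝ), (∀ i, MeasurableSet (A i)) →
      ν {y : ℕ → unitInterval | ∀ i ∈ s, (y i : ℝ) ∈ A i} =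
        ∏ i ∈ s, volume (A i ∩ Set.Icc (0:ℝ) 1)) :
    ν = Measure.infinitePi fun _ => volume := by
  refine Measure.eq_infinitePi _ fun s t ht => ?_
  choose B hB hBt using fun i => MeasurableSpace.measurableSet_comap.mp (ht i)
  obtain rfl : t = fun i => Subtype.val ⁻¹' B i := funext fun i => (hBt i).symm
  rw [show (s : Set ℕ).pi (fun i => Subtype.val ⁻¹' B i)
      = {y : ℕ → unitInterval | ∀ i ∈ s, (y i : ℝ) ∈ B i} from rfl, hν s B hB]
  simp only [unitInterval.volume_apply, Subtype.image_preimage_coe, Set.inter_comm]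

theorem measurable_perm_inv_apply {α : Type*} [MeasurableSpace α] [MeasurableSingletonClass α]
    [Countable α] [MeasurableSpace (Equiv.Perm α)]
    (h : ∀ a, Measurable fun σ : Equiv.Perm α => σ a) (a : α) :
    Measurable fun σ : Equiv.Perm α => σ⁻¹ a := by
  refine measurable_to_countable' fun b => ?_
  have : (fun σ : Equiv.Perm α => σ⁻¹ a) ⁻¹' {b} = (fun σ : Equiv.Perm α => σ b) ⁻¹' {a} := by
    ext σ
    simp [Equiv.Perm.inv_def, Equiv.eq_symm_apply, eq_comm]
  rw [this]
  exact h b (measurableSet_singleton a)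

section sdAct

variable {K X : Type*} [Group K] [MulAction K X]

theorem sdAct_one (z : (ℕ → X) × (ℕ → unitInterval)) : sdAct (K := K) 1 z = z :=
  Prod.ext (funext fun n => one_smul K (z.1 n)) rfl

theorem sdAct_mul (p q : (ℕ → K) ⋊[permAct K] Equiv.Perm ℕ) (z : (ℕ → X) × (ℕ → unitInterval)) :
    sdAct (p * q) z = sdAct p (sdAct q z) :=
  Prod.ext (funext fun _ => mul_smul _ _ _) rfl

theorem eq_one_of_sdAct_eq_self (hfree : ∀ k : K, k ≠ 1 → ∀ x : X, k • x ≠ x)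
    {p : (ℕ → K) ⋊[permAct K] Equiv.Perm ℕ} {z : (ℕ → X) × (ℕ → unitInterval)}
    (hz : Injective z.2) (h : sdAct p z = z) : p = 1 := by
  have hright : p.right = 1 := by
    ext n
    exact congrArg (fun σ : Equiv.Perm ℕ => σ n) (inv_eq_one.mp (Equiv.ext fun n =>
      hz (congrFun (congrArg Prod.snd h) n)))
  refine SemidirectProduct.ext (funext fun n => ?_) hright
  by_contra hn
  refine hfree _ hn (z.1 n) ?_
  simpa [sdAct, hright] using congrFun (congrArg Prod.fst h) n

theorem measurable_sdAct [MeasurableSpace K] [MeasurableSpace X]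
    [MeasurableSpace ((ℕ → K) ⋊[permAct K] Equiv.Perm ℕ)]
    (hmeas : Measurable (fun p : K × X => p.1 • p.2))
    (hleft : ∀ n, Measurable fun p : (ℕ → K) ⋊[permAct K] Equiv.Perm ℕ => p.left n)
    (hright : ∀ n, Measurable fun p : (ℕ → K) ⋊[permAct K] Equiv.Perm ℕ => p.right⁻¹ n) :
    Measurable fun pz : ((ℕ → K) ⋊[permAct K] Equiv.Perm ℕ) × ((ℕ → X) × (ℕ → unitInterval)) =>
      sdAct pz.1 pz.2 := by
  have hevalX : Measurable fun q : (ℕ → X) × ℕ => q.1 q.2 :=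
    measurable_from_prod_countable_left measurable_pi_apply
  have hevalI : Measurable fun q : (ℕ → unitInterval) × ℕ => q.1 q.2 :=
    measurable_from_prod_countable_left measurable_pi_apply
  refine .prodMk (measurable_pi_lambda _ fun n => ?_) (measurable_pi_lambda _ fun n => ?_)
  · exact hmeas.comp (((hleft n).comp measurable_fst).prodMk
      (hevalX.comp ((measurable_fst.comp measurable_snd).prodMk ((hright n).comp measurable_fst))))
  · exact hevalI.comp ((measurable_snd.comp measurable_snd).prodMk ((hright n).comp measurable_fst))

theorem measurePreserving_sdAct [MeasurableSpace X] {μ : Measure X} [IsProbabilityMeasure μ]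
    (hinv : ∀ k : K, MeasurePreserving (fun x => k • x) μ μ)
    (ρ : Measure unitInterval) [IsProbabilityMeasure ρ]
    (p : (ℕ → K) ⋊[permAct K] Equiv.Perm ℕ) :
    MeasurePreserving (sdAct p)
      ((Measure.infinitePi fun _ => μ).prod (Measure.infinitePi fun _ => ρ))
      ((Measure.infinitePi fun _ => μ).prod (Measure.infinitePi fun _ => ρ)) :=
  ((measurePreserving_infinitePi_map μ fun n => hinv (p.left n)).comp
    (measurePreserving_infinitePi_comp_perm μ p.right)).prod
    (measurePreserving_infinitePi_comp_perm ρ p.right)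

end sdAct

theorem stmt4_general {K X : Type*} [Group K] [MeasurableSpace K]
    [MeasurableSpace X] [MulAction K X]
    (hmeas : Measurable (fun p : K × X => p.1 • p.2))
    (hfree : ∀ k : K, k ≠ 1 → ∀ x : X, k • x ≠ x)
    (μ : Measure X) [IsProbabilityMeasure μ]
    (hinv : ∀ k : K, MeasurePreserving (fun x => k • x) μ μ)
    (νX : Measure (ℕ → X))
    (hνX : ∀ (s : Finset ℕ) (A : ℕ → Set X), (∀ i, MeasurableSet (A i)) →
      νX {x : ℕ → X | ∀ i ∈ s, x i ∈ A i} = ∏ i ∈ s, μ (A i))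
    (νY : Measure (ℕ → unitInterval))
    (hνY : ∀ (s : Finset ℕ) (A : ℕ → Set ℝ), (∀ i, MeasurableSet (A i)) →
      νY {y : ℕ → unitInterval | ∀ i ∈ s, (y i : ℝ) ∈ A i} =
        ∏ i ∈ s, volume (A i ∩ Set.Icc (0:ℝ) 1)) :
    letI : MeasurableSpace (Equiv.Perm ℕ) :=
      MeasurableSpace.comap (fun σ : Equiv.Perm ℕ => (σ : ℕ → ℕ)) inferInstance
    letI : MeasurableSpace ((ℕ → K) ⋊[permAct K] Equiv.Perm ℕ) :=
      MeasurableSpace.comap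
        (fun p : (ℕ → K) ⋊[permAct K] Equiv.Perm ℕ => (p.left, p.right)) inferInstance
    (∀ z, sdAct (K := K) (X := X) 1 z = z) ∧
    (∀ p q z, sdAct (K := K) (X := X) (p * q) z = sdAct p (sdAct q z)) ∧
    Measurable (fun pz : ((ℕ → K) ⋊[permAct K] Equiv.Perm ℕ) ×
        ((ℕ → X) × (ℕ → unitInterval)) => sdAct pz.1 pz.2) ∧
    (∀ p, MeasurePreserving (sdAct (K := K) (X := X) p) (νX.prod νY) (νX.prod νY)) ∧
    (νX.prod νY) {z : (ℕ → X) × (ℕ → unitInterval) |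
        ∀ p : (ℕ → K) ⋊[permAct K] Equiv.Perm ℕ, p ≠ 1 → sdAct p z ≠ z} = 1 := by
  let _ : MeasurableSpace (Equiv.Perm ℕ) :=
    MeasurableSpace.comap (fun σ : Equiv.Perm ℕ => (σ : ℕ → ℕ)) inferInstance
  let _ : MeasurableSpace ((ℕ → K) ⋊[permAct K] Equiv.Perm ℕ) :=
    MeasurableSpace.comap
      (fun p : (ℕ → K) ⋊[permAct K] Equiv.Perm ℕ => (p.left, p.right)) inferInstance
  obtain rfl : νX = Measure.infinitePi fun _ => μ := Measure.eq_infinitePi _ hνX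
  obtain rfl := eq_infinitePi_volume_unitInterval νY hνY
  have hproj : Measurable fun p : (ℕ → K) ⋊[permAct K] Equiv.Perm ℕ => (p.left, p.right) :=
    Measurable.of_comap_le le_rfl
  have hperm (n : ℕ) : Measurable fun σ : Equiv.Perm ℕ => σ n :=
    (measurable_pi_apply n).comp (Measurable.of_comap_le le_rfl)
  refine ⟨sdAct_one, sdAct_mul,
    measurable_sdAct hmeas (fun n => (measurable_pi_apply n).comp (measurable_fst.comp hproj))
      (fun n => (measurable_perm_inv_apply hperm n).comp (measurable_snd.comp hproj)),
    measurePreserving_sdAct hinv volume, ?_⟩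
  have hfreeAE : ∀ᵐ z ∂(Measure.infinitePi fun _ => μ).prod (Measure.infinitePi fun _ => volume),
      ∀ p : (ℕ → K) ⋊[permAct K] Equiv.Perm ℕ, p ≠ 1 → sdAct p z ≠ z :=
    (Measure.quasiMeasurePreserving_snd.ae (ae_injective_infinitePi volume)).mono
      fun z hz _ hp h => hp (eq_one_of_sdAct_eq_self hfree hz h)
  rw [measure_congr (Filter.eventuallyEq_univ.mpr hfreeAE), measure_univ]

/-- Let `K` be a Polish locally compact group acting freely, in a Borel
way, on a standard Borel space `X`, preserving a Borel probability measure `μ`, and let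
`λ` be Lebesgue measure on `[0,1]`.  The action of `S_∞ ⋉ K^ℕ` on `X^ℕ × [0,1]^ℕ`
defined by `(σ,(gₙ))·((xₙ),(yₙ)) = ((gₙ·x_{σ⁻¹ n}), (y_{σ⁻¹ n}))` is a Borel action
preserving the product measure `μ^ℕ × λ^ℕ`, and its free part has full measure. -/
theorem stmt4 {K X : Type*} [Group K] [TopologicalSpace K] [IsTopologicalGroup K]
    [PolishSpace K] [LocallyCompactSpace K] [MeasurableSpace K] [BorelSpace K]
    [MeasurableSpace X] [StandardBorelSpace X] [MulAction K X]
    (hmeas : Measurable (fun p : K × X => p.1 • p.2))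
    (hfree : ∀ k : K, k ≠ 1 → ∀ x : X, k • x ≠ x)
    (μ : Measure X) [IsProbabilityMeasure μ]
    (hinv : ∀ k : K, MeasurePreserving (fun x => k • x) μ μ)
    (νX : Measure (ℕ → X)) [IsProbabilityMeasure νX]
    (hνX : ∀ (s : Finset ℕ) (A : ℕ → Set X), (∀ i, MeasurableSet (A i)) →
      νX {x : ℕ → X | ∀ i ∈ s, x i ∈ A i} = ∏ i ∈ s, μ (A i))
    (νY : Measure (ℕ → unitInterval)) [IsProbabilityMeasure νY]
    (hνY : ∀ (s : Finset ℕ) (A : ℕ → Set ℝ), (∀ i, MeasurableSet (A i)) →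
      νY {y : ℕ → unitInterval | ∀ i ∈ s, (y i : ℝ) ∈ A i} =
        ∏ i ∈ s, volume (A i ∩ Set.Icc (0:ℝ) 1)) :
    letI : MeasurableSpace (Equiv.Perm ℕ) :=
      MeasurableSpace.comap (fun σ : Equiv.Perm ℕ => (σ : ℕ → ℕ)) inferInstance
    letI : MeasurableSpace ((ℕ → K) ⋊[permAct K] Equiv.Perm ℕ) :=
      MeasurableSpace.comap
        (fun p : (ℕ → K) ⋊[permAct K] Equiv.Perm ℕ => (p.left, p.right)) inferInstance
    (∀ z, sdAct (K := K) (X := X) 1 z = z) ∧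
    (∀ p q z, sdAct (K := K) (X := X) (p * q) z = sdAct p (sdAct q z)) ∧
    Measurable (fun pz : ((ℕ → K) ⋊[permAct K] Equiv.Perm ℕ) ×
        ((ℕ → X) × (ℕ → unitInterval)) => sdAct pz.1 pz.2) ∧
    (∀ p, MeasurePreserving (sdAct (K := K) (X := X) p) (νX.prod νY) (νX.prod νY)) ∧
    (νX.prod νY) {z : (ℕ → X) × (ℕ → unitInterval) |
        ∀ p : (ℕ → K) ⋊[permAct K] Equiv.Perm ℕ, p ≠ 1 → sdAct p z ≠ z} = 1 :=
  stmt4_general hmeas hfree μ hinv νX hνX νY hνY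
end

section
/- Let Z be a separable Banach space and let Lip(Z) be the space of 1-Lipschitz functions Z → ℝ with the topology of pointwise convergence, on which Z acts by (ζ·f)(z) = f(ζ + z). For each ζ ∈ Z with ζ ≠ 0, the set X_ζ = {f ∈ Lip(Z) : ∃ z ∈ Z, |f(ζ+z) − f(z)| > ‖ζ‖/2} is open and dense in Lip(Z). -/
/-!
A basic neighbourhood of `f` in the pointwise topology only constrains finitely many values, so
it suffices to modify `f` far away from a finite set. Clamping `f` between the cones
`c + ‖ζ‖ - ‖w - (ζ + z)‖ ≤ · ≤ c + ‖w - z‖` gives a `1`-Lipschitz function that takes the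
values `c` at `z` and `c + ‖ζ‖` at `ζ + z`; with `c = f 0` and `z` far from the finite set,
both cones leave `f` unchanged on it.
-/

open Metric Set

section Clamp

variable {X : Type*} [PseudoMetricSpace X]

theorem LipschitzWith.exists_eq_between_cones {f : X → ℝ} (hf : LipschitzWith 1 f)
    (x₀ x₁ : X) (c : ℝ) :
    ∃ g : X → ℝ, LipschitzWith 1 g ∧ g x₀ = c ∧ g x₁ = c + dist x₀ x₁ ∧
      ∀ w, c + dist x₀ x₁ - dist w x₁ ≤ f w → f w ≤ c + dist w x₀ → g w = f w := by
  have hupper : LipschitzWith 1 fun w => c + dist w x₀ := by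
    simpa using (LipschitzWith.const c).add (LipschitzWith.dist_left x₀)
  have hlower : LipschitzWith 1 fun w => c + dist x₀ x₁ - dist w x₁ := by
    simpa using (LipschitzWith.const (c + dist x₀ x₁)).sub (LipschitzWith.dist_left x₁)
  refine ⟨fun w => max (min (f w) (c + dist w x₀)) (c + dist x₀ x₁ - dist w x₁),
    by simpa using (hf.min hupper).max hlower, ?_, ?_, ?_⟩
  · simp
  · simp [dist_comm x₁ x₀]
  · intro w hlo hup
    simp [min_eq_left hup, max_eq_left hlo]

theorem LipschitzWith.exists_eqOn_closedBall_sub_eq_dist {f : X → ℝ} (hf : LipschitzWith 1 f)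
    {p x₀ x₁ : X} {M : ℝ} (hfar : 2 * M + 2 * dist x₀ x₁ ≤ dist p x₀) :
    ∃ g : X → ℝ, LipschitzWith 1 g ∧ g x₁ - g x₀ = dist x₀ x₁ ∧ EqOn g f (closedBall p M) := by
  obtain ⟨g, hg, hg₀, hg₁, hgf⟩ := hf.exists_eq_between_cones x₀ x₁ (f p)
  refine ⟨g, hg, by rw [hg₀, hg₁, add_sub_cancel_left], fun w hw => hgf w ?_ ?_⟩
  · have hfw : f p ≤ f w + dist p w := by simpa using hf.le_add_mul p w
    have := dist_triangle4 p w x₁ x₀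
    linarith [mem_closedBall.mp hw, dist_comm p w, dist_comm x₁ x₀]
  · have hfw : f w ≤ f p + dist w p := by simpa using hf.le_add_mul w p
    have := dist_triangle p w x₀
    linarith [mem_closedBall.mp hw, dist_comm p w, dist_nonneg (x := x₀) (y := x₁)]

end Clamp

theorem dense_subtype_pi_of_forall_finset {X Y : Type*} [TopologicalSpace Y] {P : (X → Y) → Prop}
    {S : Set {f // P f}} (h : ∀ f : {f // P f}, ∀ I : Finset X, ∃ g ∈ S, ∀ i ∈ I, g.1 i = f.1 i) :
    Dense S := by
  rw [dense_iff_inter_open]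
  rintro W hW ⟨f, hfW⟩
  obtain ⟨V, hV, rfl⟩ := isOpen_induced_iff.mp hW
  obtain ⟨I, u, hu, hIV⟩ := isOpen_pi_iff.mp hV f.1 hfW
  obtain ⟨g, hgS, hgf⟩ := h f I
  exact ⟨g, hIV fun i hi => hgf i hi ▸ (hu i hi).2, hgS⟩

theorem stmt6_general {Z : Type*} [NormedAddCommGroup Z] [NormedSpace ℝ Z] (ζ : Z) (hζ : ζ ≠ 0) :
    IsOpen {f : {f : Z → ℝ // LipschitzWith 1 f} |
        ∃ z : Z, |f.1 (ζ + z) - f.1 z| > ‖ζ‖ / 2} ∧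
    Dense {f : {f : Z → ℝ // LipschitzWith 1 f} |
        ∃ z : Z, |f.1 (ζ + z) - f.1 z| > ‖ζ‖ / 2} := by
  have hev (x : Z) : Continuous fun f : {f : Z → ℝ // LipschitzWith 1 f} => f.1 x :=
    (continuous_apply x).comp continuous_subtype_val
  refine ⟨?_, dense_subtype_pi_of_forall_finset fun f I => ?_⟩
  · rw [Set.ofPred_exists]
    exact isOpen_iUnion fun z => isOpen_lt continuous_const ((hev _).sub (hev z)).abs
  · have : Nontrivial Z := nontrivial_of_ne ζ 0 hζ
    obtain ⟨M, hIM⟩ := I.finite_toSet.isBounded.subset_closedBall 0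
    obtain ⟨z, hz⟩ := NormedSpace.exists_lt_norm ℝ Z (2 * M + 2 * ‖ζ‖)
    obtain ⟨g, hg, hgz, hgf⟩ := f.2.exists_eqOn_closedBall_sub_eq_dist (p := 0) (x₀ := z)
      (x₁ := ζ + z) (M := M) (by rw [dist_zero_left, dist_comm, dist_add_self_left]; exact hz.le)
    refine ⟨⟨g, hg⟩, ⟨z, ?_⟩, fun i hi => hgf (hIM hi)⟩
    rw [dist_comm, dist_add_self_left] at hgz
    simp only [hgz, abs_norm]
    linarith [norm_pos_iff.mpr hζ]

/-- Let `Z` be a separable Banach space and `Lip(Z)` the space of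
`1`-Lipschitz functions `Z → ℝ` with the topology of pointwise convergence.  For every
`ζ ≠ 0`, the set `X_ζ = {f : ∃ z, |f (ζ+z) − f z| > ‖ζ‖/2}` is open and dense. -/
theorem stmt6 {Z : Type*} [NormedAddCommGroup Z] [NormedSpace ℝ Z] [CompleteSpace Z]
    [TopologicalSpace.SeparableSpace Z] (ζ : Z) (hζ : ζ ≠ 0) :
    IsOpen {f : {f : Z → ℝ // LipschitzWith 1 f} |
        ∃ z : Z, |f.1 (ζ + z) - f.1 z| > ‖ζ‖ / 2} ∧
    Dense {f : {f : Z → ℝ // LipschitzWith 1 f} |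
        ∃ z : Z, |f.1 (ζ + z) - f.1 z| > ‖ζ‖ / 2} :=
  stmt6_general ζ hζ
end

section
/- Let Z be a separable Banach space, D a countable dense subset of Z \ {0}, and X₀ = ⋂_{ζ∈D} X_ζ where X_ζ = {f ∈ Lip(Z) : ∃ z, |f(ζ+z) − f(z)| > ‖ζ‖/2}. Then X₀ is a Z-invariant dense G_δ subset of Lip(Z) on which the translation action of Z is free: if f ∈ X₀ and ζ·f = f then ζ = 0. -/
/-!
A point of `X₀` is moved by every `ζ ∈ D`, and that is an open condition in the topology of
pointwise convergence, so `X₀` is a countable intersection of open sets. It is dense because the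
truncations `max (min g n) (‖·‖ - n)` of any `g ∈ Lip(Z)` lie in `X₀` (far out along the ray
through `ζ` they equal `‖·‖ - n`, which increases by `‖ζ‖` under the shift by `ζ`) and converge
pointwise to `g`. If `ζ ≠ 0` fixes `f`, choose `ζ' ∈ D` with `‖ζ' - ζ‖ < ‖ζ‖ / 3`; then
`|f (ζ' + z) - f z| = |f (ζ' + z) - f (ζ + z)| ≤ ‖ζ' - ζ‖ ≤ ‖ζ'‖ / 2`, so `f ∉ X_{ζ'}`.
-/

/-- The translation action of `Z` on the space of `1`-Lipschitz functions `Z → ℝ`: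
`(ζ · f) z = f (ζ + z)`. -/
def lipTrans {Z : Type*} [NormedAddCommGroup Z] (ζ : Z)
    (f : {f : Z → ℝ // LipschitzWith 1 f}) : {f : Z → ℝ // LipschitzWith 1 f} :=
  ⟨fun z => f.1 (ζ + z),
    LipschitzWith.of_edist_le fun x y => by
      simpa [edist_add_left] using f.2 (ζ + x) (ζ + y)⟩

open Filter Topology

namespace LipTranslation

variable {Z : Type*} [NormedAddCommGroup Z]

/-- The set `X_ζ` of the statement. -/
def largeIncrementSet (ζ : Z) : Set {f : Z → ℝ // LipschitzWith 1 f} :=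
  {f | ∃ z : Z, |f.1 (ζ + z) - f.1 z| > ‖ζ‖ / 2}

@[simp]
lemma lipTrans_apply (ζ : Z) (f : {f : Z → ℝ // LipschitzWith 1 f}) (z : Z) :
    (lipTrans ζ f).1 z = f.1 (ζ + z) :=
  rfl

lemma lipTrans_mem_largeIncrementSet {ζ' : Z} {f : {f : Z → ℝ // LipschitzWith 1 f}}
    (hf : f ∈ largeIncrementSet ζ') (ζ : Z) : lipTrans ζ f ∈ largeIncrementSet ζ' := by
  obtain ⟨z, hz⟩ := hf
  refine ⟨z - ζ, ?_⟩
  rwa [lipTrans_apply, lipTrans_apply, add_sub_cancel, add_left_comm, add_sub_cancel]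

lemma isOpen_largeIncrementSet (ζ : Z) : IsOpen (largeIncrementSet ζ) := by
  have hval : Continuous fun f : {f : Z → ℝ // LipschitzWith 1 f} => f.1 := continuous_subtype_val
  have hunion : largeIncrementSet ζ =
      ⋃ z : Z, {f | ‖ζ‖ / 2 < |f.1 (ζ + z) - f.1 z|} := by
    ext f
    simp [largeIncrementSet]
  rw [hunion]
  exact isOpen_iUnion fun z => isOpen_lt continuous_const
    (((continuous_apply _).comp hval).sub ((continuous_apply _).comp hval)).abs

lemma notMem_largeIncrementSet_of_lipTrans_eq {ζ ζ' : Z} {f : {f : Z → ℝ // LipschitzWith 1 f}}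
    (hζ : lipTrans ζ f = f) (hζ' : ‖ζ' - ζ‖ ≤ ‖ζ'‖ / 2) : f ∉ largeIncrementSet ζ' := by
  rintro ⟨z, hz⟩
  have hper : f.1 (ζ + z) = f.1 z := congrFun (congrArg Subtype.val hζ) z
  have hlip : |f.1 (ζ' + z) - f.1 (ζ + z)| ≤ ‖ζ' - ζ‖ := by
    simpa [Real.dist_eq, dist_eq_norm] using f.2.dist_le_mul (ζ' + z) (ζ + z)
  rw [hper] at hlip
  linarith

def normTruncation (g : {f : Z → ℝ // LipschitzWith 1 f}) (n : ℕ) :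
    {f : Z → ℝ // LipschitzWith 1 f} :=
  ⟨fun z => max (min (g.1 z) n) (‖z‖ - n), by
    have hnorm : LipschitzWith 1 fun z : Z => ‖z‖ - (n : ℝ) := fun x y => by
      simpa [edist_sub_right] using lipschitzWith_one_norm x y
    simpa using (g.2.min_const (n : ℝ)).max hnorm⟩

lemma normTruncation_apply_of_le (g : {f : Z → ℝ // LipschitzWith 1 f}) {n : ℕ} {z : Z}
    (hz : 2 * (n : ℝ) ≤ ‖z‖) : (normTruncation g n).1 z = ‖z‖ - n :=
  max_eq_right (by linarith [min_le_right (g.1 z) (n : ℝ)])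

lemma tendsto_normTruncation (g : {f : Z → ℝ // LipschitzWith 1 f}) :
    Tendsto (normTruncation g) atTop (𝓝 g) := by
  rw [tendsto_subtype_rng, tendsto_pi_nhds]
  intro z
  refine tendsto_const_nhds.congr' ?_
  filter_upwards [eventually_ge_atTop ⌈max (g.1 z) (‖z‖ - g.1 z)⌉₊] with n hn
  have hbound : max (g.1 z) (‖z‖ - g.1 z) ≤ n := Nat.ceil_le.1 hn
  have hle : g.1 z ≤ n := (le_max_left _ _).trans hbound
  have hge : ‖z‖ - n ≤ g.1 z := by linarith [(le_max_right _ _).trans hbound]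
  change g.1 z = max (min (g.1 z) n) (‖z‖ - n)
  rw [min_eq_left hle, max_eq_left hge]

lemma normTruncation_mem_largeIncrementSet [NormedSpace ℝ Z]
    (g : {f : Z → ℝ // LipschitzWith 1 f}) (n : ℕ) {ζ : Z} (hζ : ζ ≠ 0) :
    normTruncation g n ∈ largeIncrementSet ζ := by
  have hpos : 0 < ‖ζ‖ := norm_pos_iff.2 hζ
  set t : ℝ := 2 * n / ‖ζ‖
  have ht : 0 ≤ t := by positivity
  have hz : ‖t • ζ‖ = 2 * n := by
    rw [norm_smul, Real.norm_of_nonneg ht, div_mul_cancel₀ _ hpos.ne']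
  have hζz : ‖ζ + t • ζ‖ = ‖ζ‖ + 2 * n := by
    rw [(SameRay.sameRay_nonneg_smul_right ζ ht).norm_add, hz]
  refine ⟨t • ζ, ?_⟩
  rw [normTruncation_apply_of_le g (by rw [hζz]; linarith [hz.ge]),
    normTruncation_apply_of_le g hz.ge, hζz, hz, abs_of_pos (by linarith)]
  linarith

end LipTranslation

open LipTranslation in
theorem stmt7_general {Z : Type*} [NormedAddCommGroup Z] [NormedSpace ℝ Z]
    (D : Set Z) (hDc : D.Countable) (hD0 : 0 ∉ D)
    (hDdense : {z : Z | z ≠ 0} ⊆ closure D) :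
    (∀ ζ : Z, ∀ f ∈ ⋂ ζ' ∈ D, {f : {f : Z → ℝ // LipschitzWith 1 f} |
          ∃ z : Z, |f.1 (ζ' + z) - f.1 z| > ‖ζ'‖ / 2},
        lipTrans ζ f ∈ ⋂ ζ' ∈ D, {f : {f : Z → ℝ // LipschitzWith 1 f} |
          ∃ z : Z, |f.1 (ζ' + z) - f.1 z| > ‖ζ'‖ / 2}) ∧
    Dense (⋂ ζ' ∈ D, {f : {f : Z → ℝ // LipschitzWith 1 f} |
        ∃ z : Z, |f.1 (ζ' + z) - f.1 z| > ‖ζ'‖ / 2}) ∧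
    IsGδ (⋂ ζ' ∈ D, {f : {f : Z → ℝ // LipschitzWith 1 f} |
        ∃ z : Z, |f.1 (ζ' + z) - f.1 z| > ‖ζ'‖ / 2}) ∧
    (∀ f ∈ ⋂ ζ' ∈ D, {f : {f : Z → ℝ // LipschitzWith 1 f} |
          ∃ z : Z, |f.1 (ζ' + z) - f.1 z| > ‖ζ'‖ / 2},
        ∀ ζ : Z, lipTrans ζ f = f → ζ = 0) := by
  change (∀ ζ : Z, ∀ f ∈ ⋂ ζ' ∈ D, largeIncrementSet ζ',
      lipTrans ζ f ∈ ⋂ ζ' ∈ D, largeIncrementSet ζ')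
    ∧ Dense (⋂ ζ' ∈ D, largeIncrementSet ζ') ∧ IsGδ (⋂ ζ' ∈ D, largeIncrementSet ζ')
    ∧ ∀ f ∈ ⋂ ζ' ∈ D, largeIncrementSet ζ', ∀ ζ : Z, lipTrans ζ f = f → ζ = 0
  simp only [Set.mem_iInter₂]
  refine ⟨fun ζ f hf ζ' hζ' => lipTrans_mem_largeIncrementSet (hf ζ' hζ') ζ, fun g => ?_,
    .biInter hDc fun ζ' _ => (isOpen_largeIncrementSet ζ').isGδ, fun f hf ζ hζ => ?_⟩
  · exact mem_closure_of_tendsto (tendsto_normTruncation g) <| .of_forall fun n =>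
      Set.mem_iInter₂.2 fun ζ' hζ' =>
        normTruncation_mem_largeIncrementSet g n (ne_of_mem_of_not_mem hζ' hD0)
  · by_contra h0
    obtain ⟨ζ', hζ'D, hclose⟩ :=
      Metric.mem_closure_iff.1 (hDdense h0) (‖ζ‖ / 3) (by simpa using norm_pos_iff.2 h0)
    rw [dist_eq_norm, ← norm_neg, neg_sub] at hclose
    refine notMem_largeIncrementSet_of_lipTrans_eq hζ ?_ (hf ζ' hζ'D)
    linarith [norm_sub_norm_le ζ ζ', norm_sub_rev ζ ζ']

/-- Let `Z` be a separable Banach space, `D` a countable dense subset of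
`Z \ {0}`, and `X₀ = ⋂_{ζ ∈ D} X_ζ` where
`X_ζ = {f : ∃ z, |f (ζ+z) − f z| > ‖ζ‖/2}`.  Then `X₀` is a `Z`-invariant dense `G_δ`
subset of `Lip(Z)` on which the translation action of `Z` is free. -/
theorem stmt7 {Z : Type*} [NormedAddCommGroup Z] [NormedSpace ℝ Z] [CompleteSpace Z]
    [TopologicalSpace.SeparableSpace Z]
    (D : Set Z) (hDc : D.Countable) (hD0 : 0 ∉ D)
    (hDdense : {z : Z | z ≠ 0} ⊆ closure D) :
    (∀ ζ : Z, ∀ f ∈ ⋂ ζ' ∈ D, {f : {f : Z → ℝ // LipschitzWith 1 f} |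
          ∃ z : Z, |f.1 (ζ' + z) - f.1 z| > ‖ζ'‖ / 2},
        lipTrans ζ f ∈ ⋂ ζ' ∈ D, {f : {f : Z → ℝ // LipschitzWith 1 f} |
          ∃ z : Z, |f.1 (ζ' + z) - f.1 z| > ‖ζ'‖ / 2}) ∧
    Dense (⋂ ζ' ∈ D, {f : {f : Z → ℝ // LipschitzWith 1 f} |
        ∃ z : Z, |f.1 (ζ' + z) - f.1 z| > ‖ζ'‖ / 2}) ∧
    IsGδ (⋂ ζ' ∈ D, {f : {f : Z → ℝ // LipschitzWith 1 f} |
        ∃ z : Z, |f.1 (ζ' + z) - f.1 z| > ‖ζ'‖ / 2}) ∧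
    (∀ f ∈ ⋂ ζ' ∈ D, {f : {f : Z → ℝ // LipschitzWith 1 f} |
          ∃ z : Z, |f.1 (ζ' + z) - f.1 z| > ‖ζ'‖ / 2},
        ∀ ζ : Z, lipTrans ζ f = f → ζ = 0) :=
  stmt7_general D hDc hD0 hDdense
end

section
/- Every separable infinite-dimensional Banach space Z, viewed as a topological group under addition, admits a free continuous measure-preserving action on a compact metrizable group K with its Haar probability measure; concretely, Z embeds as a topological subgroup of ℝ^ℕ, which is a subgroup of K = (S¹ × S¹)^ℕ, acting on K by left translation. -/
/-!
Norming functionals `f n` of a dense sequence `u n` (`‖f n‖ ≤ 1`, `f n (u n) = ‖u n‖`) separate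
points: if every `f n` kills `z`, then `‖u n‖ ≤ ‖u n - z‖`, so `‖z‖ ≤ 2 ‖z - u n‖` for all `n`.
This embeds `Z` continuously and linearly into `ℝ^ℕ`. An irrational winding
`t ↦ (t, α t) mod 1` embeds `ℝ` into the torus, hence `ℝ^ℕ` into the compact group `(T²)^ℕ`,
and translation by a nonzero element of a group fixes no point and preserves every
left-invariant measure.
-/

open MeasureTheory

section NormingFunctionals

variable {E : Type*} [NormedAddCommGroup E] [NormedSpace ℝ E]

lemma eq_zero_of_forall_norming_seq_eq_zero {u : ℕ → E} (hu : DenseRange u)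
    {f : ℕ → StrongDual ℝ E} (hf_norm : ∀ n, ‖f n‖ ≤ 1) (hf_eval : ∀ n, f n (u n) = ‖u n‖)
    {z : E} (hz : ∀ n, f n z = 0) : z = 0 := by
  have hclose : ∀ n, ‖z‖ ≤ 2 * ‖z - u n‖ := fun n => by
    have hun : ‖u n‖ ≤ ‖z - u n‖ :=
      calc ‖u n‖ = f n (u n - z) := by rw [map_sub, hz, sub_zero, hf_eval]
        _ ≤ ‖f n (u n - z)‖ := Real.le_norm_self _
        _ ≤ 1 * ‖u n - z‖ := (f n).le_of_opNorm_le (hf_norm n) _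
        _ = ‖z - u n‖ := by rw [one_mul, norm_sub_rev]
    calc ‖z‖ = ‖(z - u n) + u n‖ := by rw [sub_add_cancel]
      _ ≤ ‖z - u n‖ + ‖u n‖ := norm_add_le _ _
      _ ≤ 2 * ‖z - u n‖ := by linarith
  refine norm_le_zero_iff.mp (le_of_forall_pos_le_add fun ε hε => ?_)
  obtain ⟨n, hn⟩ := hu.exists_dist_lt z (half_pos hε)
  rw [dist_eq_norm] at hn
  linarith [hclose n]

variable [TopologicalSpace.SeparableSpace E]

lemma exists_continuousLinearMap_pi_nat_injective :
    ∃ ψ : E →L[ℝ] (ℕ → ℝ), Function.Injective ψ := by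
  obtain ⟨u, hu⟩ := TopologicalSpace.exists_dense_seq E
  choose f hf_norm hf_eval using fun n => exists_dual_vector'' ℝ (u n)
  refine ⟨ContinuousLinearMap.pi f, (injective_iff_map_eq_zero _).mpr fun z hz => ?_⟩
  exact eq_zero_of_forall_norming_seq_eq_zero hu hf_norm hf_eval (congrFun hz)

end NormingFunctionals

section IrrationalWinding

noncomputable def irrationalWinding (α : ℝ) : ℝ →+ AddCircle (1 : ℝ) × AddCircle (1 : ℝ) :=
  (QuotientAddGroup.mk' _).prod ((QuotientAddGroup.mk' _).comp (AddMonoidHom.mulLeft α))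

lemma continuous_irrationalWinding (α : ℝ) : Continuous (irrationalWinding α) :=
  continuous_quotient_mk'.prodMk (continuous_quotient_mk'.comp (continuous_const_mul α))

lemma irrationalWinding_injective {α : ℝ} (hα : Irrational α) :
    Function.Injective (irrationalWinding α) := by
  refine (injective_iff_map_eq_zero _).mpr fun t ht => ?_
  obtain ⟨m, hm⟩ := (AddCircle.coe_eq_zero_iff 1).mp (congrArg Prod.fst ht)
  obtain ⟨k, hk⟩ := (AddCircle.coe_eq_zero_iff 1).mp (congrArg Prod.snd ht)
  simp only [zsmul_eq_mul, mul_one] at hm hk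
  subst hm
  by_contra hm0
  exact (hα.mul_intCast (by exact_mod_cast hm0)).ne_int k (by simpa using hk.symm)

end IrrationalWinding

theorem stmt11_general {Z : Type*} [NormedAddCommGroup Z] [NormedSpace ℝ Z]
    [TopologicalSpace.SeparableSpace Z] :
    (∃ ψ : Z →+ (ℕ → ℝ), Continuous ψ ∧ Function.Injective ψ) ∧
    ∃ φ : Z →+ (ℕ → AddCircle (1 : ℝ) × AddCircle (1 : ℝ)),
      Continuous φ ∧ Function.Injective φ ∧
      (∀ z : Z, z ≠ 0 → ∀ k : ℕ → AddCircle (1 : ℝ) × AddCircle (1 : ℝ),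
        φ z + k ≠ k) ∧
      ∀ η : Measure (ℕ → AddCircle (1 : ℝ) × AddCircle (1 : ℝ)),
        IsProbabilityMeasure η → η.IsAddLeftInvariant →
        ∀ z : Z, MeasurePreserving (fun k => φ z + k) η η := by
  obtain ⟨ψ, hψ⟩ := exists_continuousLinearMap_pi_nat_injective (E := Z)
  let φ := ((irrationalWinding √2).compLeft ℕ).comp ψ.toLinearMap.toAddMonoidHom
  have hφ_cont : Continuous φ := continuous_pi fun n =>
    (continuous_irrationalWinding _).comp ((continuous_apply n).comp ψ.continuous)
  have hφ_inj : Function.Injective φ :=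
    (irrationalWinding_injective irrational_sqrt_two).comp_left.comp hψ
  refine ⟨⟨ψ.toLinearMap.toAddMonoidHom, ψ.continuous, hψ⟩, φ, hφ_cont, hφ_inj, ?_, ?_⟩
  · intro z hz k hk
    exact hz ((injective_iff_map_eq_zero φ).mp hφ_inj z (add_eq_right.mp hk))
  · intro η _ _ z
    exact measurePreserving_add_left η (φ z)

/-- Every separable infinite-dimensional Banach space `Z` (as an
additive topological group) embeds in `ℝ^ℕ`, hence in the compact metrizable group
`K = (S¹ × S¹)^ℕ`, and acts on `K` freely by translation, preserving the Haar
probability measure. -/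
theorem stmt11 {Z : Type*} [NormedAddCommGroup Z] [NormedSpace ℝ Z] [CompleteSpace Z]
    [TopologicalSpace.SeparableSpace Z] (hdim : ¬ FiniteDimensional ℝ Z) :
    (∃ ψ : Z →+ (ℕ → ℝ), Continuous ψ ∧ Function.Injective ψ) ∧
    ∃ φ : Z →+ (ℕ → AddCircle (1 : ℝ) × AddCircle (1 : ℝ)),
      Continuous φ ∧ Function.Injective φ ∧
      (∀ z : Z, z ≠ 0 → ∀ k : ℕ → AddCircle (1 : ℝ) × AddCircle (1 : ℝ),
        φ z + k ≠ k) ∧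
      ∀ η : Measure (ℕ → AddCircle (1 : ℝ) × AddCircle (1 : ℝ)),
        IsProbabilityMeasure η → η.IsAddLeftInvariant →
        ∀ z : Z, MeasurePreserving (fun k => φ z + k) η η :=
  stmt11_general
end

section
/- (Neumann-type lemma, strengthened) Let G ≤ Sym(ℕ) be a group acting on ℕ, and partition ℕ = A ⊔ B where B is the set of points with infinite G-orbit and A the set of points with finite G-orbit. Then there exists a sequence (g_n) in G such that: (1) for every finite F ⊆ B, F ∩ g_n[F] = ∅ for all but finitely many n; and (2) for every a ∈ A, g_n(a) = a for all but finitely many n. -/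
/-! Neumann's lemma: if every point of a finite set `F` has an infinite orbit, some `g` moves `F`
off itself, for otherwise the group is covered by the finitely many cosets
`{g | g • a = b}` (`a, b ∈ F`) of point stabilizers, and by B. H. Neumann one of these
stabilizers would have finite index. Points with finite orbits are fixed by a subgroup of finite
index, on which the orbits of `F` are still infinite, so `g` may be taken in that subgroup.
Applying this to the initial segments `{0, …, n - 1}` of `ℕ` gives the sequence `gₙ`. -/

open Pointwise

namespace MulAction

variable {M α : Type*} [Group M] [MulAction M α]

theorem finiteIndex_stabilizer_iff {a : α} :
    (stabilizer M a).FiniteIndex ↔ (orbit M a).Finite :=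
  Subgroup.finiteIndex_iff_finite_quotient.trans
    ((orbitEquivQuotientStabilizer M a).finite_iff.symm.trans Set.finite_coe_iff)

theorem orbit_infinite_of_finiteIndex {H : Subgroup M} [H.FiniteIndex] {b : α}
    (hb : (orbit M b).Infinite) : (orbit H b).Infinite := by
  intro hHb
  have hstab : stabilizer H b = (stabilizer M b).subgroupOf H := by
    ext g
    simp [Subgroup.mem_subgroupOf, Subgroup.smul_def]
  have hrel : (stabilizer M b).relIndex H ≠ 0 := by
    rw [Subgroup.relIndex, ← hstab]
    exact (finiteIndex_stabilizer_iff.mpr hHb).index_ne_zero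
  have hH : H.relIndex ⊤ ≠ 0 := H.relIndex_top_right ▸ Subgroup.FiniteIndex.index_ne_zero
  refine hb (finiteIndex_stabilizer_iff.mp ⟨?_⟩)
  rw [← Subgroup.relIndex_top_right]
  exact Subgroup.relIndex_ne_zero_trans hrel hH

theorem exists_smul_notMem_of_orbit_infinite (F : Finset α)
    (hF : ∀ b ∈ F, (orbit M b).Infinite) : ∃ g : M, ∀ a ∈ F, g • a ∉ F := by
  by_contra! hcover
  let transporter (p : α × α) : M := Classical.epsilon fun g : M => g • p.1 = p.2
  have hcovers : ⋃ p ∈ F ×ˢ F, transporter p • (stabilizer M p.1 : Set M) = Set.univ := by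
    refine Set.eq_univ_of_forall fun g => ?_
    obtain ⟨a, ha, hga⟩ := hcover g
    have htransporter : transporter (a, g • a) • a = g • a :=
      Classical.epsilon_spec (p := fun h : M => h • a = g • a) ⟨g, rfl⟩
    refine Set.mem_biUnion (x := (a, g • a)) (Finset.mem_product.mpr ⟨ha, hga⟩) ?_
    rw [mem_leftCoset_iff, SetLike.mem_coe, mem_stabilizer_iff, mul_smul, inv_smul_eq_iff]
    exact htransporter.symm
  obtain ⟨p, hp, hfin⟩ := Subgroup.exists_finiteIndex_of_leftCoset_cover hcovers
  exact hF p.1 (Finset.mem_product.mp hp).1 (finiteIndex_stabilizer_iff.mp hfin)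

theorem finiteIndex_fixingSubgroup_of_orbit_finite (D : Finset α)
    (hD : ∀ a ∈ D, (orbit M a).Finite) : (fixingSubgroup M (D : Set α)).FiniteIndex := by
  have := Subgroup.finiteIndex_iInf' (stabilizer M) fun a ha =>
    finiteIndex_stabilizer_iff.mpr (hD a ha)
  refine Subgroup.finiteIndex_of_le (H := ⨅ a ∈ D, stabilizer M a) fun g hg => ?_
  simp only [Subgroup.mem_iInf, mem_stabilizer_iff] at hg
  exact (mem_fixingSubgroup_iff M).mpr hg

theorem exists_mem_fixingSubgroup_smul_notMem (F D : Finset α)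
    (hF : ∀ b ∈ F, (orbit M b).Infinite) (hD : ∀ a ∈ D, (orbit M a).Finite) :
    ∃ g ∈ fixingSubgroup M (D : Set α), ∀ a ∈ F, g • a ∉ F := by
  have := finiteIndex_fixingSubgroup_of_orbit_finite D hD
  obtain ⟨g, hg⟩ := exists_smul_notMem_of_orbit_infinite F fun b hb =>
    orbit_infinite_of_finiteIndex (H := fixingSubgroup M (D : Set α)) (hF b hb)
  exact ⟨g, g.2, hg⟩

end MulAction

/-- strengthened Neumann lemma: Let `G ≤ Sym(ℕ)` and partition
`ℕ = A ⊔ B`, `B` the points with infinite `G`-orbit and `A` those with finite orbit.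
There is a sequence `(gₙ)` in `G` with: (1) for every finite `F ⊆ B`,
`F ∩ gₙ[F] = ∅` for all but finitely many `n`; (2) for every `a ∈ A`, `gₙ a = a` for
all but finitely many `n`. -/
theorem stmt13 (G : Subgroup (Equiv.Perm ℕ)) :
    ∃ g : ℕ → G,
      (∀ F : Finset ℕ, (∀ b ∈ F, (MulAction.orbit G b).Infinite) →
        ∀ᶠ n in Filter.atTop, ∀ a ∈ F, (g n : Equiv.Perm ℕ) a ∉ F) ∧
      (∀ a : ℕ, (MulAction.orbit G a).Finite →
        ∀ᶠ n in Filter.atTop, (g n : Equiv.Perm ℕ) a = a) := by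
  classical
  have hstep (n : ℕ) := MulAction.exists_mem_fixingSubgroup_smul_notMem (M := G)
    ((Finset.range n).filter fun b => (MulAction.orbit G b).Infinite)
    ((Finset.range n).filter fun a => (MulAction.orbit G a).Finite)
    (fun _ hb => (Finset.mem_filter.mp hb).2) (fun _ ha => (Finset.mem_filter.mp ha).2)
  choose g hfix hmove using hstep
  refine ⟨g, fun F hF => ?_, fun a ha => ?_⟩
  · filter_upwards [(Finset.eventually_all F).2 fun b _ => Filter.eventually_gt_atTop b]
      with n hn a haF hgaF
    exact hmove n a (Finset.mem_filter.mpr ⟨Finset.mem_range.mpr (hn a haF), hF a haF⟩)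
      (Finset.mem_filter.mpr ⟨Finset.mem_range.mpr (hn _ hgaF), hF _ hgaF⟩)
  · filter_upwards [Filter.eventually_gt_atTop a] with n hn
    exact (mem_fixingSubgroup_iff G).mp (hfix n) a
      (Finset.mem_filter.mpr ⟨Finset.mem_range.mpr hn, ha⟩)
end

section
/- Let G ≤ Sym(ℕ) be a closed non-compact subgroup, i.e., some point of ℕ has infinite G-orbit. Consider the shift action of G on ℝ^ℕ. Then there exists a G-invariant subspace Y of ℝ^ℕ on which the action has a dense orbit and all orbits are meager in Y. -/
/-- The shift action of a permutation of `ℕ` on `ℝ^ℕ`: `(g · x) n = x (g⁻¹ n)`. -/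
def shiftR (g : Equiv.Perm ℕ) (x : ℕ → ℝ) : ℕ → ℝ := fun n => x (g⁻¹ n)

/-!
Let `O` be an infinite `G`-orbit and `Y = ℝ^O`, realised as the functions on `ℕ` vanishing off `O`:
a closed, hence Polish, `G`-invariant subspace of `ℝ^ℕ`. By B. H. Neumann's lemma every finite
`F ⊆ O` is moved off itself by some `g ∈ G`, so two basic open sets of `Y`, which only constrain
finitely many coordinates, can be glued along `F` and `g F`: the action on `Y` is topologically
transitive, and the Baire category theorem yields a point with dense orbit. Every orbit is meagre,
because at a fixed coordinate `a ∈ O` the orbit of `y` only takes the countably many values `y m`,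
and each `{z ∈ Y | z a = r}` is closed and nowhere dense.
-/

open MulAction Set Function Filter Topology
open scoped Pointwise

theorem MulAction.exists_smul_notMem_of_orbit_infinite_s15 {Γ X : Type*} [Group Γ] [MulAction Γ X]
    (F : Finset X) (hF : ∀ x ∈ F, (orbit Γ x).Infinite) : ∃ g : Γ, ∀ x ∈ F, g • x ∉ F := by
  by_contra! hcover
  have hchoice : ∀ p : X × X, ∃ g : Γ, p.2 ∈ orbit Γ p.1 → g • p.1 = p.2 := fun p =>
    (em (p.2 ∈ orbit Γ p.1)).elim (fun ⟨g, hg⟩ => ⟨g, fun _ => hg⟩)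
      fun h => ⟨1, fun h' => absurd h' h⟩
  choose c hc using hchoice
  -- otherwise finitely many cosets of the infinite-index stabilizers of points of `F` cover `Γ`
  have hcovers : ⋃ p ∈ F ×ˢ F, c p • (stabilizer Γ p.1 : Set Γ) = univ := by
    refine eq_univ_of_forall fun γ => ?_
    obtain ⟨x, hx, hγx⟩ := hcover γ
    refine mem_biUnion (x := (x, γ • x)) (Finset.mem_product.2 ⟨hx, hγx⟩) ?_
    rw [mem_leftCoset_iff, SetLike.mem_coe, mem_stabilizer_iff, mul_smul,
      inv_smul_eq_iff, hc (x, γ • x) (mem_orbit x γ)]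
  obtain ⟨p, hp, hfin⟩ := Subgroup.exists_finiteIndex_of_leftCoset_cover hcovers
  refine hfin.index_ne_zero ?_
  rw [index_stabilizer]
  exact (hF p.1 (Finset.mem_product.1 hp).1).ncard

theorem MulAction.exists_smul_notMem_of_subset_orbit {Γ X : Type*} [Group Γ] [MulAction Γ X]
    {a : X} (ha : (orbit Γ a).Infinite) (F : Finset X) (hF : ↑F ⊆ orbit Γ a) :
    ∃ g : Γ, ∀ x ∈ F, g • x ∉ F :=
  exists_smul_notMem_of_orbit_infinite_s15 F fun x hx => by rwa [orbit_eq_iff.2 (hF hx)]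

theorem MulAction.smul_mem_orbit_iff {Γ X : Type*} [Group Γ] [MulAction Γ X] (γ : Γ) {x a : X} :
    γ • x ∈ orbit Γ a ↔ x ∈ orbit Γ a := by
  rw [← orbit_eq_iff, orbit_smul, orbit_eq_iff]

theorem exists_finset_forall_apply_eq_imp_mem_of_mem_nhds {ι : Type*} {π : ι → Type*}
    [∀ i, TopologicalSpace (π i)] {s : Set (∀ i, π i)} {u : s} {U : Set s} (hU : U ∈ 𝓝 u) :
    ∃ I : Finset ι, ∀ w : s, (∀ i ∈ I, (w : ∀ i, π i) i = (u : ∀ i, π i) i) → w ∈ U := by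
  obtain ⟨N, hN, hNU⟩ := (mem_nhds_subtype s u U).1 hU
  rw [nhds_pi, Filter.mem_pi'] at hN
  obtain ⟨I, t, ht, hIt⟩ := hN
  refine ⟨I, fun w hw => hNU (hIt fun i hi => ?_)⟩
  rw [hw i hi]
  exact mem_of_mem_nhds (ht i)

theorem exists_denseRange_of_topologicallyTransitive {X ι : Type*} [TopologicalSpace X]
    [BaireSpace X] [SecondCountableTopology X] [Nonempty X] {f : ι → X → X}
    (hf : ∀ i, Continuous (f i))
    (htrans : ∀ {U V : Set X}, IsOpen U → U.Nonempty → IsOpen V → V.Nonempty →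
      ∃ i, (U ∩ f i ⁻¹' V).Nonempty) :
    ∃ x, DenseRange fun i => f i x := by
  obtain ⟨B, hBc, -, hB⟩ := TopologicalSpace.exists_countable_basis X
  set S := {V ∈ B | V.Nonempty}
  have hopen : ∀ V ∈ S, IsOpen (⋃ i, f i ⁻¹' V) := fun V hV =>
    isOpen_iUnion fun i => (hB.isOpen hV.1).preimage (hf i)
  have hdense : ∀ V ∈ S, Dense (⋃ i, f i ⁻¹' V) := fun V hV =>
    dense_iff_inter_open.2 fun U hU hU₀ => by
      obtain ⟨i, x, hx⟩ := htrans hU hU₀ (hB.isOpen hV.1) hV.2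
      exact ⟨x, hx.1, mem_iUnion.2 ⟨i, hx.2⟩⟩
  obtain ⟨x, hx⟩ := (dense_biInter_of_isOpen hopen (hBc.mono (sep_subset _ _)) hdense).nonempty
  refine ⟨x, hB.dense_iff.2 fun V hV hV₀ => ?_⟩
  obtain ⟨i, hi⟩ := mem_iUnion.1 (mem_iInter₂.1 hx V ⟨hV, hV₀⟩)
  exact ⟨f i x, hi, i, rfl⟩

def vanishingOff (O : Set ℕ) : Set (ℕ → ℝ) := {z | support z ⊆ O}

theorem isClosed_vanishingOff (O : Set ℕ) : IsClosed (vanishingOff O) := by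
  have : vanishingOff O = ⋂ n ∈ Oᶜ, {z | z n = 0} := by
    ext z
    simp only [vanishingOff, support_subset_iff', mem_iInter, mem_compl_iff, mem_ofPred_eq]
  rw [this]
  exact isClosed_biInter fun n _ => isClosed_eq (continuous_apply n) continuous_const

theorem zero_mem_vanishingOff (O : Set ℕ) : (0 : ℕ → ℝ) ∈ vanishingOff O := by
  simp [vanishingOff]

theorem continuous_shiftR (g : Equiv.Perm ℕ) : Continuous (shiftR g) :=
  continuous_pi fun _ => continuous_apply _

theorem isNowhereDense_setOf_apply_eq {O : Set ℕ} {a : ℕ} (ha : a ∈ O) (r : ℝ) :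
    IsNowhereDense {z : vanishingOff O | (z : ℕ → ℝ) a = r} := by
  refine (isClosed_eq ((continuous_apply a).comp continuous_subtype_val)
    continuous_const).isNowhereDense_iff.2 (interior_eq_empty_iff_dense_compl.2 fun z => ?_)
  -- perturbing the `a`-th coordinate of `z` leaves the set but, as `a ∈ O`, not `vanishingOff O`
  let φ : ℝ → vanishingOff O := fun t => ⟨update z a t, fun n hn => by
    by_cases hna : n = a
    · exact hna ▸ ha
    · exact z.2 (by rwa [mem_support, update_of_ne hna] at hn)⟩
  have hφ : Continuous φ := Continuous.subtype_mk (by fun_prop) _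
  have hz : φ ((z : ℕ → ℝ) a) = z := Subtype.ext (update_eq_self a (z : ℕ → ℝ))
  rw [← hz]
  refine map_mem_closure hφ (by rw [closure_compl_singleton r]; trivial) fun t ht => ?_
  simpa [φ] using ht

theorem isMeagre_preimage_val_setOf_exists_eq_shiftR {O : Set ℕ} {a : ℕ} (ha : a ∈ O)
    (S : Set (Equiv.Perm ℕ)) (y : ℕ → ℝ) :
    IsMeagre (Subtype.val ⁻¹' {x : ℕ → ℝ | ∃ g ∈ S, x = shiftR g y} : Set (vanishingOff O)) := by
  refine IsMeagre.mono ?_ (isMeagre_iUnion fun m : ℕ =>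
    (isNowhereDense_setOf_apply_eq ha (y m)).isMeagre)
  rintro z ⟨g, -, hz⟩
  exact mem_iUnion.2 ⟨g⁻¹ a, by simp [hz, shiftR]⟩

section OrbitShift

variable {G : Subgroup (Equiv.Perm ℕ)} {a : ℕ}

theorem shiftR_mem_vanishingOff (γ : G) {z : ℕ → ℝ} (hz : z ∈ vanishingOff (orbit G a)) :
    shiftR γ z ∈ vanishingOff (orbit G a) := fun _ hn =>
  (smul_mem_orbit_iff γ⁻¹).1 (hz hn)

theorem exists_mem_vanishingOff_agree_shiftR_agree (ha : (orbit G a).Infinite) {u v : ℕ → ℝ}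
    (hu : u ∈ vanishingOff (orbit G a)) (hv : v ∈ vanishingOff (orbit G a)) (I J : Finset ℕ) :
    ∃ γ : G, ∃ w ∈ vanishingOff (orbit G a),
      (∀ n ∈ I, w n = u n) ∧ ∀ n ∈ J, shiftR γ w n = v n := by
  classical
  obtain ⟨γ, hγ⟩ := exists_smul_notMem_of_subset_orbit ha ((I ∪ J).filter (· ∈ orbit G a))
    fun n hn => (Finset.mem_filter.1 hn).2
  have hγIJ : ∀ n ∈ I, n ∈ orbit G a → γ • n ∉ J := fun n hnI hn hγn =>
    hγ n (by simp [hnI, hn]) (by simp [hγn, (smul_mem_orbit_iff γ).2 hn])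
  -- `w` is `u` overwritten by `γ⁻¹ • v` on `γ⁻¹ J`, which misses `I ∩ O`
  refine ⟨γ, fun m => if γ • m ∈ J then v (γ • m) else u m, fun m hm => ?_, fun n hn => ?_,
    fun n hn => ?_⟩
  · rw [mem_support] at hm
    split_ifs at hm
    · exact (smul_mem_orbit_iff γ).1 (hv hm)
    · exact hu hm
  · by_cases hnO : n ∈ orbit G a
    · simp [hγIJ n hn hnO]
    · have hγn : γ • n ∉ orbit G a := mt (smul_mem_orbit_iff γ).1 hnO
      simp only [notMem_support.1 (mt (@hu n) hnO), notMem_support.1 (mt (@hv _) hγn), ite_self]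
  · simp [shiftR, Subgroup.smul_def, Equiv.Perm.smul_def, hn]

def orbitShift (γ : G) (z : vanishingOff (orbit G a)) : vanishingOff (orbit G a) :=
  ⟨shiftR γ z, shiftR_mem_vanishingOff γ z.2⟩

theorem continuous_orbitShift (γ : G) :
    Continuous (orbitShift γ : vanishingOff (orbit G a) → vanishingOff (orbit G a)) :=
  ((continuous_shiftR γ).comp continuous_subtype_val).subtype_mk _

theorem exists_inter_preimage_orbitShift_nonempty (ha : (orbit G a).Infinite)
    {U V : Set (vanishingOff (orbit G a))} (hU : IsOpen U) (hU₀ : U.Nonempty) (hV : IsOpen V)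
    (hV₀ : V.Nonempty) : ∃ γ : G, (U ∩ orbitShift γ ⁻¹' V).Nonempty := by
  obtain ⟨u, hu⟩ := hU₀
  obtain ⟨v, hv⟩ := hV₀
  obtain ⟨I, hI⟩ := exists_finset_forall_apply_eq_imp_mem_of_mem_nhds (hU.mem_nhds hu)
  obtain ⟨J, hJ⟩ := exists_finset_forall_apply_eq_imp_mem_of_mem_nhds (hV.mem_nhds hv)
  obtain ⟨γ, w, hw, hwu, hwv⟩ := exists_mem_vanishingOff_agree_shiftR_agree ha u.2 v.2 I J
  exact ⟨γ, ⟨w, hw⟩, hI _ hwu, hJ _ hwv⟩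

end OrbitShift

theorem stmt15_general (G : Subgroup (Equiv.Perm ℕ))
    (hnc : ∃ a : ℕ, (MulAction.orbit G a).Infinite) :
    ∃ Y : Set (ℕ → ℝ),
      (∀ g ∈ G, ∀ x ∈ Y, shiftR g x ∈ Y) ∧
      (∃ y ∈ Y, Y ⊆ closure {x : ℕ → ℝ | ∃ g ∈ G, x = shiftR g y}) ∧
      (∀ y ∈ Y, IsMeagre
        ((Subtype.val ⁻¹' {x : ℕ → ℝ | ∃ g ∈ G, x = shiftR g y}) : Set Y)) := by
  obtain ⟨a, ha⟩ := hnc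
  have : PolishSpace (vanishingOff (orbit G a)) := (isClosed_vanishingOff _).polishSpace
  have : Nonempty (vanishingOff (orbit G a)) := ⟨⟨0, zero_mem_vanishingOff _⟩⟩
  obtain ⟨y, hy⟩ := exists_denseRange_of_topologicallyTransitive continuous_orbitShift
    (exists_inter_preimage_orbitShift_nonempty ha)
  refine ⟨vanishingOff (orbit G a), fun g hg _ => shiftR_mem_vanishingOff ⟨g, hg⟩, ⟨y, y.2, ?_⟩,
    fun z _ => isMeagre_preimage_val_setOf_exists_eq_shiftR (mem_orbit_self a) G z⟩
  refine (Subtype.dense_iff.1 hy).trans (closure_mono ?_)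
  rintro _ ⟨_, ⟨γ, rfl⟩, rfl⟩
  exact ⟨γ, γ.2, rfl⟩

/-- Let `G` be a closed non-compact subgroup of `Sym(ℕ)`, i.e. some
point of `ℕ` has infinite `G`-orbit.  For the shift action of `G` on `ℝ^ℕ` there is a
`G`-invariant subspace `Y` on which the action has a dense orbit and every orbit is
meager in `Y`. -/
theorem stmt15 (G : Subgroup (Equiv.Perm ℕ))
    (hGclosed : @IsClosed _
      (TopologicalSpace.induced (fun σ : Equiv.Perm ℕ => (σ : ℕ → ℕ))
        Pi.topologicalSpace)
      (G : Set (Equiv.Perm ℕ)))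
    (hnc : ∃ a : ℕ, (MulAction.orbit G a).Infinite) :
    ∃ Y : Set (ℕ → ℝ),
      (∀ g ∈ G, ∀ x ∈ Y, shiftR g x ∈ Y) ∧
      (∃ y ∈ Y, Y ⊆ closure {x : ℕ → ℝ | ∃ g ∈ G, x = shiftR g y}) ∧
      (∀ y ∈ Y, IsMeagre
        ((Subtype.val ⁻¹' {x : ℕ → ℝ | ∃ g ∈ G, x = shiftR g y}) : Set Y)) :=
  stmt15_general G hnc
end

section
/- Let G ≤ Sym(ℕ) be a closed subgroup and suppose h ∈ ℕ^ℕ is injective but not surjective, and h is a limit in ℕ^ℕ of a sequence (h_n) from G. Define φ : [ℝ]^ℕ → [ℝ]^ℕ by φ(x)(n) = x(h(n)). Then φ is a continuous open surjection, and for every x ∈ [ℝ]^ℕ, the sequence h_n⁻¹·x converges to φ(x) in the shift action, while the G-orbits of x and φ(x) are distinct. -/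
/-!
Since `h` is injective, `φ(x) = x ∘ h` only forgets the values of `x` off `range h`, so a
preimage of `y` is any injective extension of `y ∘ h⁻¹` from `range h` to `ℕ`. Such
extensions exist even inside a prescribed basic open set: every nonempty open subset of `ℝ`
minus the countable set `range y` is infinite, and injective choice from infinitely many
infinite sets is a greedy recursion. This gives surjectivity and openness. The convergence
is pointwise, because `hₙ m` is eventually `h m` in the discrete space `ℕ`. Finally the shift
action only permutes the values of `x`, whereas `range φ(x) = x '' range h ⊊ range x`.
-/

/-- The shift action on the space `[ℝ]^ℕ` of injective sequences. -/
def shiftP (g : Equiv.Perm ℕ) (x : {x : ℕ → ℝ // Function.Injective x}) :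
    {x : ℕ → ℝ // Function.Injective x} :=
  ⟨fun n => x.1 (g⁻¹ n), x.2.comp (g⁻¹).injective⟩

/-- The map `φ(x)(n) = x (h n)` on `[ℝ]^ℕ`, for an injection `h : ℕ → ℕ`. -/
def phiMap (h : ℕ → ℕ) (hinj : Function.Injective h)
    (x : {x : ℕ → ℝ // Function.Injective x}) : {x : ℕ → ℝ // Function.Injective x} :=
  ⟨fun n => x.1 (h n), x.2.comp hinj⟩

open Function Set Filter Topology

theorem exists_injective_forall_mem {α : Type*} {A : ℕ → Set α} (hA : ∀ n, (A n).Infinite) :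
    ∃ z : ℕ → α, Injective z ∧ ∀ n, z n ∈ A n := by
  classical
  choose f hfA hfS using fun (S : Finset α) n => (hA n).exists_notMem_finset S
  -- `S n` collects the values chosen before step `n`.
  let S : ℕ → Finset α := fun n => Nat.rec ∅ (fun n s => insert (f s n) s) n
  have hS : Monotone S := monotone_nat_of_le_succ fun n => Finset.subset_insert _ _
  refine ⟨fun n => f (S n) n, .of_lt_imp_ne fun m n hmn hfmn => ?_, fun n => hfA _ n⟩
  have hmem : f (S m) m ∈ S n := hS hmn (Finset.mem_insert_self _ _)
  exact hfS (S n) n (hfmn ▸ hmem)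

theorem injective_extend_of_disjoint_range {α β γ : Type*} {f : α → β} {g : α → γ}
    {e : β → γ} (hf : Injective f) (hg : Injective g) (he : Injective e)
    (hge : Disjoint (range g) (range e)) : Injective (extend f g e) := by
  intro b₁ b₂ heq
  by_cases h₁ : ∃ a, f a = b₁ <;> by_cases h₂ : ∃ a, f a = b₂
  · obtain ⟨a₁, rfl⟩ := h₁
    obtain ⟨a₂, rfl⟩ := h₂
    rw [hf.extend_apply, hf.extend_apply] at heq
    rw [hg heq]
  · obtain ⟨a₁, rfl⟩ := h₁
    rw [hf.extend_apply, extend_apply' _ _ _ h₂] at heq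
    exact (hge.ne_of_mem (mem_range_self a₁) (mem_range_self b₂) heq).elim
  · obtain ⟨a₂, rfl⟩ := h₂
    rw [hf.extend_apply, extend_apply' _ _ _ h₁] at heq
    exact (hge.ne_of_mem (mem_range_self a₂) (mem_range_self b₁) heq.symm).elim
  · rw [extend_apply' _ _ _ h₁, extend_apply' _ _ _ h₂] at heq
    exact he heq

section Extension

variable {X : Type*} [TopologicalSpace X]

theorem IsOpen.infinite_diff_of_countable (hX : ∀ s : Set X, s.Countable → Dense sᶜ)
    {U C : Set X} (hU : IsOpen U) (hne : U.Nonempty) (hC : C.Countable) : (U \ C).Infinite := by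
  intro hfin
  obtain ⟨x, hx, hxU⟩ := (hX _ (hC.union hfin.countable)).exists_mem_open hU hne
  simp_all

theorem exists_injective_comp_eq_forall_mem (hX : ∀ s : Set X, s.Countable → Dense sᶜ)
    {ι : Type*} [Countable ι] {h : ι → ℕ} (hinj : Injective h) {y : ι → X} (hy : Injective y)
    {W : ℕ → Set X} (hWo : ∀ m, IsOpen (W m)) (hWne : ∀ m, (W m).Nonempty)
    (hyW : ∀ n, y n ∈ W (h n)) :
    ∃ x : ℕ → X, Injective x ∧ x ∘ h = y ∧ ∀ m, x m ∈ W m := by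
  obtain ⟨z, hz, hzW⟩ := exists_injective_forall_mem fun m =>
    (hWo m).infinite_diff_of_countable hX (hWne m) (countable_range y)
  have hdisj : Disjoint (range y) (range z) :=
    disjoint_right.mpr fun _ ⟨m, hm⟩ => hm ▸ (hzW m).2
  refine ⟨extend h y z, injective_extend_of_disjoint_range hinj hy hz hdisj,
    funext (hinj.extend_apply y z), fun m => ?_⟩
  by_cases hm : ∃ n, h n = m
  · obtain ⟨n, rfl⟩ := hm
    rw [hinj.extend_apply]
    exact hyW n
  · rw [extend_apply' _ _ _ hm]
    exact (hzW m).1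

end Extension

section Phi

variable {h : ℕ → ℕ} (hinj : Injective h)

theorem continuous_phiMap : Continuous (phiMap h hinj) := by
  refine Continuous.subtype_mk ?_ _
  exact continuous_pi fun n => (continuous_apply (h n)).comp continuous_subtype_val

theorem surjective_phiMap : Surjective (phiMap h hinj) := by
  intro y
  obtain ⟨x, hx, hxh, -⟩ := exists_injective_comp_eq_forall_mem
    (fun s hs => hs.dense_compl ℝ) hinj y.2
    (W := fun _ => univ) (fun _ => isOpen_univ) (fun _ => univ_nonempty) (fun _ => mem_univ _)
  exact ⟨⟨x, hx⟩, Subtype.ext hxh⟩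

theorem isOpenMap_phiMap : IsOpenMap (phiMap h hinj) := by
  classical
  intro U hU
  obtain ⟨V, hV, rfl⟩ := isOpen_induced_iff.mp hU
  rw [isOpen_iff_mem_nhds]
  rintro _ ⟨x, hxV, rfl⟩
  obtain ⟨F, W, hW, hFW⟩ := isOpen_pi_iff.mp hV x.1 hxV
  have hnhds : Subtype.val ⁻¹' (h ⁻¹' F).pi (fun n => W (h n)) ∈ 𝓝 (phiMap h hinj x) :=
    continuous_subtype_val.continuousAt.preimage_mem_nhds <|
      set_pi_mem_nhds (F.finite_toSet.preimage hinj.injOn) fun n hn =>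
        (hW _ hn).1.mem_nhds (hW _ hn).2
  refine mem_of_superset hnhds fun y hy => ?_
  obtain ⟨x', hx', hx'h, hx'W⟩ := exists_injective_comp_eq_forall_mem
    (fun s hs => hs.dense_compl ℝ) hinj y.2 (W := fun m => if m ∈ F then W m else univ)
    (fun m => by split_ifs with hm; exacts [(hW m hm).1, isOpen_univ])
    (fun m => by split_ifs with hm; exacts [⟨_, (hW m hm).2⟩, univ_nonempty])
    (fun n => by split_ifs with hn; exacts [hy n hn, mem_univ _])
  refine ⟨⟨x', hx'⟩, hFW fun m hm => ?_, Subtype.ext hx'h⟩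
  simpa [Finset.mem_coe.mp hm] using hx'W m

theorem tendsto_shiftP_inv_phiMap {ι : Type*} {l : Filter ι} {g : ι → Equiv.Perm ℕ}
    (hg : Tendsto (fun k => (g k : ℕ → ℕ)) l (𝓝 h)) (x : {x : ℕ → ℝ // Injective x}) :
    Tendsto (fun k => shiftP (g k)⁻¹ x) l (𝓝 (phiMap h hinj x)) := by
  have hcomp : Continuous fun f : ℕ → ℕ => x.1 ∘ f :=
    continuous_pi fun n => continuous_of_discreteTopology.comp (continuous_apply n)
  exact tendsto_subtype_rng.mpr ((hcomp.tendsto h).comp hg)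

theorem shiftP_ne_phiMap (hnonsurj : ¬ Surjective h) (g : Equiv.Perm ℕ)
    (x : {x : ℕ → ℝ // Injective x}) : shiftP g x ≠ phiMap h hinj x := by
  intro heq
  have hgh : ∀ n, g⁻¹ n = h n := fun n => x.2 (congrFun (congrArg Subtype.val heq) n)
  exact hnonsurj fun m => ⟨g m, by simp [← hgh]⟩

end Phi

theorem stmt16_general (G : Subgroup (Equiv.Perm ℕ))
    (h : ℕ → ℕ) (hinj : Function.Injective h) (hnonsurj : ¬ Function.Surjective h)
    (hk : ℕ → G)
    (hlim : Filter.Tendsto (fun k => ((hk k : Equiv.Perm ℕ) : ℕ → ℕ))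
      Filter.atTop (nhds h)) :
    Continuous (phiMap h hinj) ∧ IsOpenMap (phiMap h hinj) ∧
    Function.Surjective (phiMap h hinj) ∧
    (∀ x : {x : ℕ → ℝ // Function.Injective x},
      Filter.Tendsto (fun k => shiftP ((hk k : Equiv.Perm ℕ))⁻¹ x)
        Filter.atTop (nhds (phiMap h hinj x))) ∧
    (∀ x : {x : ℕ → ℝ // Function.Injective x},
      ∀ g ∈ G, shiftP g x ≠ phiMap h hinj x) :=
  ⟨continuous_phiMap hinj, isOpenMap_phiMap hinj, surjective_phiMap hinj,
    tendsto_shiftP_inv_phiMap hinj hlim, fun x g _ => shiftP_ne_phiMap hinj hnonsurj g x⟩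

/-- Let `G ≤ Sym(ℕ)` be closed, `h : ℕ → ℕ` injective, non-surjective,
a pointwise limit of `(hₙ) ⊆ G`, and `φ(x)(n) = x (h n)` on `[ℝ]^ℕ`.  Then `φ` is a
continuous open surjection, `hₙ⁻¹ · x → φ(x)` for the shift action, and the `G`-orbits
of `x` and `φ(x)` are distinct for every `x`. -/
theorem stmt16 (G : Subgroup (Equiv.Perm ℕ))
    (hGclosed : @IsClosed _
      (TopologicalSpace.induced (fun σ : Equiv.Perm ℕ => (σ : ℕ → ℕ))
        Pi.topologicalSpace)
      (G : Set (Equiv.Perm ℕ)))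
    (h : ℕ → ℕ) (hinj : Function.Injective h) (hnonsurj : ¬ Function.Surjective h)
    (hk : ℕ → G)
    (hlim : Filter.Tendsto (fun k => ((hk k : Equiv.Perm ℕ) : ℕ → ℕ))
      Filter.atTop (nhds h)) :
    Continuous (phiMap h hinj) ∧ IsOpenMap (phiMap h hinj) ∧
    Function.Surjective (phiMap h hinj) ∧
    (∀ x : {x : ℕ → ℝ // Function.Injective x},
      Filter.Tendsto (fun k => shiftP ((hk k : Equiv.Perm ℕ))⁻¹ x)
        Filter.atTop (nhds (phiMap h hinj x))) ∧
    (∀ x : {x : ℕ → ℝ // Function.Injective x},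
      ∀ g ∈ G, shiftP g x ≠ phiMap h hinj x) :=
  stmt16_general G h hinj hnonsurj hk hlim
end

section
/- Let G be a group acting on ℕ, so that the points of ℕ split into those with finite orbits and those with infinite orbits. Then for any finite subset F of points with infinite orbits and any finite subset D of points with finite orbits, there exists g ∈ G with F ∩ g[F] = ∅ and g(d) = d for all d ∈ D. -/
open MulAction Subgroup Pointwise

private lemma finset_inf_finiteIndex {G : Type*} [Group G] {ι : Type*} (s : Finset ι)
    (f : ι → Subgroup G) (hf : ∀ i ∈ s, (f i).FiniteIndex) :
    (s.inf f).FiniteIndex := by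
  classical
  induction s using Finset.induction_on with
  | empty => simpa using (inferInstance : (⊤ : Subgroup G).FiniteIndex)
  | @insert a t hat ih =>
    rw [Finset.inf_insert]
    have h1 : (f a).FiniteIndex := hf a (Finset.mem_insert_self a t)
    have h2 : (t.inf f).FiniteIndex := ih fun i hi => hf i (Finset.mem_insert_of_mem hi)
    exact inferInstance

/-- Neumann-type lemma with fixed points: Let a group `G` act on `ℕ`.
For any finite set `F` of points with infinite orbits and any finite set `D` of points
with finite orbits, there is `g ∈ G` with `F ∩ g[F] = ∅` and `g d = d` for `d ∈ D`. -/
theorem stmt18 {G : Type*} [Group G] [MulAction G ℕ] (F D : Finset ℕ)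
    (hF : ∀ x ∈ F, (MulAction.orbit G x).Infinite)
    (hD : ∀ d ∈ D, (MulAction.orbit G d).Finite) :
    ∃ g : G, (∀ x ∈ F, g • x ∉ F) ∧ ∀ d ∈ D, g • d = d := by
  classical
  by_contra hcon
  push_neg at hcon
  -- the pointwise stabilizer of D
  set H : Subgroup G := D.inf (fun d => MulAction.stabilizer G d) with hHdef
  have hmemH : ∀ a : G, a ∈ H ↔ ∀ d ∈ D, a • d = d := by
    intro a
    simp [hHdef, Finset.inf_eq_iInf, Subgroup.mem_iInf, MulAction.mem_stabilizer_iff]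
  have hHfin : H.FiniteIndex := by
    apply finset_inf_finiteIndex
    intro d hd
    constructor
    rw [MulAction.index_stabilizer]
    have : (MulAction.orbit G d).Nonempty := ⟨d, MulAction.mem_orbit_self d⟩
    exact Set.ncard_ne_zero_of_mem (MulAction.mem_orbit_self d) (hD d hd)
  haveI := hHfin
  haveI : Finite (G ⧸ H) := Subgroup.finite_quotient_of_finiteIndex
  haveI : Fintype (G ⧸ H) := Fintype.ofFinite _
  -- key: every element of H sends some point of F into F
  have key : ∀ a : G, a ∈ H → ∃ x ∈ F, a • x ∈ F := by
    intro a ha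
    by_contra hno
    push_neg at hno
    obtain ⟨d, hd, hne⟩ := hcon a hno
    exact hne ((hmemH a).1 ha d hd)
  -- build a coset covering
  set ι : Type _ := (ℕ × ℕ) ⊕ (G ⧸ H) with hι
  set K : ι → Subgroup G := Sum.elim (fun p => MulAction.stabilizer G p.1) (fun _ => H)
    with hK
  set c : ι → G := Sum.elim
    (fun p => if h : ∃ g : G, g • p.1 = p.2 then h.choose else 1)
    (fun q => q.out) with hc
  set s : Finset ι :=
    ((F ×ˢ F).map ⟨Sum.inl, Sum.inl_injective⟩) ∪
      ((Finset.univ.filter (fun q : G ⧸ H => q ≠ QuotientGroup.mk 1)).map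
        ⟨Sum.inr, Sum.inr_injective⟩) with hs
  have hcovers : ⋃ i ∈ s, c i • (K i : Set G) = Set.univ := by
    apply Set.eq_univ_of_forall
    intro a
    simp only [Set.mem_iUnion]
    by_cases haH : a ∈ H
    · obtain ⟨x, hx, hax⟩ := key a haH
      refine ⟨Sum.inl (x, a • x), ?_, ?_⟩
      · simp only [hs, Finset.mem_union, Finset.mem_map, Function.Embedding.coeFn_mk,
          Finset.mem_product]
        exact Or.inl ⟨(x, a • x), ⟨hx, hax⟩, rfl⟩
      · have hex : ∃ g : G, g • (x, a • x).1 = (x, a • x).2 := ⟨a, rfl⟩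
        rw [hc]
        simp only [Sum.elim_inl, dif_pos hex]
        rw [mem_leftCoset_iff, hK]
        simp only [Sum.elim_inl, SetLike.mem_coe]
        have hcs : hex.choose • x = a • x := hex.choose_spec
        rw [MulAction.mem_stabilizer_iff, mul_smul]
        have h2 := congrArg (fun y => hex.choose⁻¹ • y) hcs
        simpa using h2.symm
    · refine ⟨Sum.inr (QuotientGroup.mk a), ?_, ?_⟩
      · simp only [hs, Finset.mem_union, Finset.mem_map, Function.Embedding.coeFn_mk,
          Finset.mem_filter, Finset.mem_univ, true_and]
        right
        refine ⟨QuotientGroup.mk a, ?_, rfl⟩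
        intro heq
        apply haH
        have := QuotientGroup.eq.1 heq
        simpa using this
      · rw [hc]
        simp only [Sum.elim_inr]
        rw [mem_leftCoset_iff, hK]
        simp only [Sum.elim_inr, SetLike.mem_coe]
        have : QuotientGroup.mk (s := H) (QuotientGroup.mk (s := H) a).out =
            QuotientGroup.mk a := QuotientGroup.out_eq' _
        exact QuotientGroup.eq.1 this
  -- apply B. H. Neumann's lemma: infinite-index cosets can be dropped
  have hfiltered := Subgroup.leftCoset_cover_filter_FiniteIndex
    (H := K) (g := c) (s := s) hcovers
  have h1 : (1 : G) ∈ ⋃ k ∈ s.filter (fun i => (K i).FiniteIndex), c k • (K k : Set G) := by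
    rw [hfiltered]; trivial
  simp only [Set.mem_iUnion, Finset.mem_filter] at h1
  obtain ⟨k, ⟨hks, hkfi⟩, hk1⟩ := h1
  cases k with
  | inl p =>
    -- stabilizer of a point of F has infinite index
    have hpF : p ∈ F ×ˢ F := by
      simp only [hs, Finset.mem_union, Finset.mem_map, Function.Embedding.coeFn_mk] at hks
      rcases hks with ⟨q, hq, hqe⟩ | ⟨q, _, hqe⟩
      · cases hqe; exact hq
      · cases hqe
    have hp1 : p.1 ∈ F := (Finset.mem_product.1 hpF).1
    have : (MulAction.stabilizer G p.1).index = 0 := by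
      rw [MulAction.index_stabilizer]
      exact (hF p.1 hp1).ncard
    rw [hK] at hkfi
    simp only [Sum.elim_inl] at hkfi
    exact hkfi.index_ne_zero this
  | inr q =>
    have hqne : q ≠ QuotientGroup.mk 1 := by
      simp only [hs, Finset.mem_union, Finset.mem_map, Function.Embedding.coeFn_mk,
        Finset.mem_filter, Finset.mem_univ, true_and] at hks
      rcases hks with ⟨p, _, hpe⟩ | ⟨r, hr, hre⟩
      · cases hpe
      · cases hre; exact hr
    apply hqne
    rw [hc] at hk1
    simp only [Sum.elim_inr] at hk1
    rw [mem_leftCoset_iff, hK] at hk1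
    simp only [Sum.elim_inr, mul_one, SetLike.mem_coe] at hk1
    have houtH : q.out ∈ H := by simpa using H.inv_mem_iff.1 hk1
    have : QuotientGroup.mk (s := H) q.out = QuotientGroup.mk 1 := by
      rw [QuotientGroup.eq]
      simpa using houtH
    exact (QuotientGroup.out_eq' q).symm.trans this
end

section
/- Let Z be an infinite-dimensional Banach space, V = B(0, r) the open ball of radius r around 0, and W = B(0, r/2). Then for every finite set {z_1, …, z_k} ⊆ Z there exists ζ ∈ V \ W such that ‖ζ + z_i − z_j‖ ≥ ‖z_i − z_j‖ for all i, j ≤ k. -/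
/-!
Take norming functionals `g` of the differences `a = zᵢ - zⱼ`. Their common kernel has finite
codimension, hence is nontrivial in an infinite-dimensional space, and every `ζ` in it satisfies
`‖a‖ = g (ζ + a) ≤ ‖ζ + a‖`. Any `ζ` of norm `3r/4` in that kernel works.
-/

theorem iInf_ker_ne_bot_of_not_finiteDimensional {K E ι : Type*} [Field K] [AddCommGroup E]
    [Module K E] [Finite ι] (hE : ¬ FiniteDimensional K E) (f : ι → E →ₗ[K] K) :
    ⨅ i, LinearMap.ker (f i) ≠ ⊥ := by
  rw [← LinearMap.ker_pi, Ne, LinearMap.ker_eq_bot]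
  exact fun hinj ↦ hE (.of_injective _ hinj)

theorem norm_le_norm_add_of_apply_eq_zero {𝕜 E : Type*} [RCLike 𝕜] [SeminormedAddCommGroup E]
    [NormedSpace 𝕜 E] {g : StrongDual 𝕜 E} (hg : ‖g‖ ≤ 1) {a ζ : E} (ha : g a = ‖a‖)
    (hζ : g ζ = 0) : ‖a‖ ≤ ‖ζ + a‖ :=
  calc ‖a‖ = ‖g (ζ + a)‖ := by simp [hζ, ha]
    _ ≤ ‖ζ + a‖ := by simpa using g.le_of_opNorm_le hg (ζ + a)

theorem exists_norm_eq_forall_norm_le_norm_add {E ι : Type*} [NormedAddCommGroup E]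
    [NormedSpace ℝ E] [Finite ι] (hE : ¬ FiniteDimensional ℝ E) (a : ι → E) {s : ℝ}
    (hs : 0 ≤ s) : ∃ ζ : E, ‖ζ‖ = s ∧ ∀ i, ‖a i‖ ≤ ‖ζ + a i‖ := by
  choose g hg_norm hg_apply using fun i ↦ exists_dual_vector'' ℝ (a i)
  let V : Submodule ℝ E := ⨅ i, LinearMap.ker (g i : E →ₗ[ℝ] ℝ)
  have : Nontrivial V :=
    Submodule.nontrivial_iff_ne_bot.mpr (iInf_ker_ne_bot_of_not_finiteDimensional hE _)
  obtain ⟨⟨ζ, hζ_ker⟩, hζ_norm⟩ := exists_norm_eq V hs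
  refine ⟨ζ, hζ_norm, fun i ↦ norm_le_norm_add_of_apply_eq_zero (hg_norm i) (hg_apply i) ?_⟩
  exact (Submodule.mem_iInf _).mp hζ_ker i

theorem stmt19_general {Z : Type*} [NormedAddCommGroup Z] [NormedSpace ℝ Z]
    (hdim : ¬ FiniteDimensional ℝ Z) (r : ℝ) (hr : 0 < r) {k : ℕ} (z : Fin k → Z) :
    ∃ ζ : Z, ζ ∈ Metric.ball (0 : Z) r \ Metric.ball (0 : Z) (r / 2) ∧
      ∀ i j, ‖z i - z j‖ ≤ ‖ζ + z i - z j‖ := by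
  obtain ⟨ζ, hζ_norm, hζ⟩ := exists_norm_eq_forall_norm_le_norm_add hdim
    (fun p : Fin k × Fin k ↦ z p.1 - z p.2) (s := 3 * r / 4) (by positivity)
  refine ⟨ζ, ?_, fun i j ↦ by simpa only [add_sub_assoc] using hζ (i, j)⟩
  simp only [Set.mem_sdiff, Metric.mem_ball, dist_zero_right, hζ_norm]
  constructor <;> linarith

/-- Let `Z` be an infinite-dimensional Banach space, `V = B(0,r)` and
`W = B(0,r/2)`.  For every finite `{z₁,…,z_k} ⊆ Z` there is `ζ ∈ V \ W` with
`‖ζ + zᵢ − z_j‖ ≥ ‖zᵢ − z_j‖` for all `i, j ≤ k`. -/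
theorem stmt19 {Z : Type*} [NormedAddCommGroup Z] [NormedSpace ℝ Z] [CompleteSpace Z]
    (hdim : ¬ FiniteDimensional ℝ Z) (r : ℝ) (hr : 0 < r) {k : ℕ} (z : Fin k → Z) :
    ∃ ζ : Z, ζ ∈ Metric.ball (0 : Z) r \ Metric.ball (0 : Z) (r / 2) ∧
      ∀ i j, ‖z i - z j‖ ≤ ‖ζ + z i - z j‖ :=
  stmt19_general hdim r hr z
end
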